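/- arXiv:1806.06267 — 8 statements merged into one kernel-verified Lean document; each statement's English description precedes it below -/
import Mathlib

section
/- For every integer d ≥ 2, there exists a finite vertex set V and a system of d+1 simple graphs G_1, …, G_{d+1} on V, each of maximum degree at most d, that does not have a cooperative coloring. -/
/-- A set of vertices is independent in the graph `G`:
no two of its vertices are adjacent. -/
def IndepIn {V : Type*} (G : SimpleGraph V) (I : Set V) : Prop :=
  ∀ ⦃u⦄, u ∈ I → ∀ ⦃v⦄, v ∈ I → ¬ G.Adj u v

/-- `(I j)` is a cooperative coloring for the system `G` of graphs:
each `I j` is independent in `G j` and the sets `I j` cover all vertices. -/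
def IsCoopColoring {V : Type*} {m : ℕ} (G : Fin m → SimpleGraph V)
    (I : Fin m → Set V) : Prop :=
  (∀ j, IndepIn (G j) (I j)) ∧ (⋃ j, I j) = Set.univ

/-- The system `G` of graphs has a cooperative coloring. -/
def HasCoopColoring {V : Type*} {m : ℕ} (G : Fin m → SimpleGraph V) : Prop :=
  ∃ I : Fin m → Set V, IsCoopColoring G I

/-- The maximum degree of a graph on a finite vertex set. -/
noncomputable def maxDeg {V : Type*} [Fintype V] (G : SimpleGraph V) : ℕ :=
  Finset.univ.sup fun v => (G.neighborSet v).ncard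

namespace CoopCounter

/-- Vertex type: `none` is the root `r`; `some (j, .inl (b, i))` is the `i`-th
vertex of the clique `D_j^b`; `some (j, .inr b)` is the vertex `w_j^b`. -/
abbrev Vt (d : ℕ) := Option ((Fin (d+1)) × ((Bool × Fin d) ⊕ Bool))

/-- The (directed) edge relation of the `k`-th graph. -/
def rel (d : ℕ) (k : Fin (d+1)) : Vt d → Vt d → Prop
  | some (j, .inl (b, _i)), some (j', .inl (b', _i')) =>
      j = j' ∧ ((k ≠ j ∧ b = b') ∨ (k = j ∧ b ≠ b'))
  | some (j, .inr b), some (j', .inl (b', _i')) => j = j' ∧ k ≠ j ∧ b = b'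
  | none, some (j, .inr _b) => k = j
  | _, _ => False

/-- The `k`-th graph of the system. -/
def H (d : ℕ) (k : Fin (d+1)) : SimpleGraph (Vt d) := SimpleGraph.fromRel (rel d k)

section adj

variable {d : ℕ}

lemma adj_clique {k j : Fin (d+1)} (hk : k ≠ j) (b : Bool) {i i' : Fin d} (h : i ≠ i') :
    (H d k).Adj (some (j, .inl (b, i))) (some (j, .inl (b, i'))) := by
  refine ⟨by simp [h], Or.inl ?_⟩
  simp [rel, hk]

lemma adj_star {k j : Fin (d+1)} (hk : k ≠ j) (b : Bool) (i : Fin d) :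
    (H d k).Adj (some (j, .inr b)) (some (j, .inl (b, i))) := by
  refine ⟨by simp, Or.inl ?_⟩
  simp [rel, hk]

lemma adj_bip {j : Fin (d+1)} (i i' : Fin d) :
    (H d j).Adj (some (j, .inl (false, i))) (some (j, .inl (true, i'))) := by
  refine ⟨by simp, Or.inl ?_⟩
  simp [rel]

lemma adj_root {j : Fin (d+1)} (b : Bool) :
    (H d j).Adj none (some (j, .inr b)) := by
  refine ⟨by simp, Or.inl ?_⟩
  simp [rel]

end adj

lemma ncard_le_of_subset_range {α : Type*} {s : Set α} {m : ℕ} (f : Fin m → α)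
    (h : s ⊆ Set.range f) : s.ncard ≤ m := by
  calc s.ncard ≤ (Set.range f).ncard := Set.ncard_le_ncard h (Set.finite_range f)
    _ = (f '' Set.univ).ncard := by rw [Set.image_univ]
    _ ≤ (Set.univ : Set (Fin m)).ncard := Set.ncard_image_le Set.finite_univ
    _ = m := by simp [Set.ncard_univ]

lemma deg_H_le {d : ℕ} (hd : 2 ≤ d) (k : Fin (d+1)) (v : Vt d) :
    ((H d k).neighborSet v).ncard ≤ d := by
  haveI : NeZero d := ⟨by omega⟩
  have h10 : (1 : Fin d) ≠ 0 := by
    have : (1 : Fin d).val = 1 % d := Fin.val_one' d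
    intro hh
    rw [hh] at this
    simp at this
    omega
  match v with
  | none =>
      refine ncard_le_of_subset_range
        (fun i => if i = 0 then (some (k, .inr false) : Vt d) else some (k, .inr true)) ?_
      rintro u ⟨hne, h | h⟩
      · match u with
        | none => exact absurd rfl hne
        | some (j, .inl _) => exact absurd h (by simp [rel])
        | some (j, .inr b) =>
            have hkj : k = j := h
            subst hkj
            cases b
            · exact ⟨0, by simp⟩
            · exact ⟨1, by simp [h10]⟩
      · match u with
        | none => exact absurd rfl hne
        | some (j, .inl _) => exact absurd h (by simp [rel])
        | some (j, .inr b) => exact absurd h (by simp [rel])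
  | some (j, .inr b) =>
      by_cases hkj : k = j
      · subst hkj
        refine ncard_le_of_subset_range (fun _ => (none : Vt d)) ?_
        rintro u ⟨hne, h | h⟩
        · match u with
          | none => exact ⟨0, rfl⟩
          | some (j', .inl _) =>
              obtain ⟨h1, h2, h3⟩ := h
              exact absurd rfl h2
          | some (j', .inr b') => exact absurd h (by simp [rel])
        · match u with
          | none => exact ⟨0, rfl⟩
          | some (j', .inl _) => exact absurd h (by simp [rel])
          | some (j', .inr b') => exact absurd h (by simp [rel])
      · refine ncard_le_of_subset_range
          (fun i => (some (j, .inl (b, i)) : Vt d)) ?_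
        rintro u ⟨hne, h | h⟩
        · match u with
          | none => exact absurd h (by simp [rel])
          | some (j', .inl (b', i')) =>
              obtain ⟨h1, _h2, h3⟩ := h
              subst h1; subst h3
              exact ⟨i', rfl⟩
          | some (j', .inr b') => exact absurd h (by simp [rel])
        · match u with
          | none =>
              have : k = j := h
              exact absurd this hkj
          | some (j', .inl _) => exact absurd h (by simp [rel])
          | some (j', .inr b') => exact absurd h (by simp [rel])
  | some (j, .inl (b, i)) =>
      by_cases hkj : k = j
      · subst hkj
        refine ncard_le_of_subset_range
          (fun i' => (some (k, .inl (!b, i')) : Vt d)) ?_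
        rintro u ⟨hne, h | h⟩
        · match u with
          | none => exact absurd h (by simp [rel])
          | some (j', .inl (b', i')) =>
              obtain ⟨h1, h2⟩ := h
              subst h1
              rcases h2 with ⟨hk', _⟩ | ⟨_, hb'⟩
              · exact absurd rfl hk'
              · refine ⟨i', ?_⟩
                have : b' = !b := by
                  cases b <;> cases b' <;> simp_all
                rw [this]
          | some (j', .inr b') => exact absurd h (by simp [rel])
        · match u with
          | none => exact absurd h (by simp [rel])
          | some (j', .inl (b', i')) =>
              obtain ⟨h1, h2⟩ := h
              subst h1
              rcases h2 with ⟨hk', _⟩ | ⟨_, hb'⟩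
              · exact absurd rfl hk'
              · refine ⟨i', ?_⟩
                have : b' = !b := by
                  cases b <;> cases b' <;> simp_all
                rw [this]
          | some (j', .inr b') =>
              obtain ⟨h1, h2, h3⟩ := h
              exact absurd h1.symm h2
      · refine ncard_le_of_subset_range
          (fun i' => if i' = i then (some (j, .inr b) : Vt d) else some (j, .inl (b, i'))) ?_
        rintro u ⟨hne, h | h⟩
        · match u with
          | none => exact absurd h (by simp [rel])
          | some (j', .inl (b', i')) =>
              obtain ⟨h1, h2⟩ := h
              subst h1
              rcases h2 with ⟨_, hb'⟩ | ⟨hk', _⟩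
              · subst hb'
                have hii : i' ≠ i := by
                  intro hh; subst hh; exact hne rfl
                exact ⟨i', by simp [hii]⟩
              · exact absurd hk' hkj
          | some (j', .inr b') => exact absurd h (by simp [rel])
        · match u with
          | none => exact absurd h (by simp [rel])
          | some (j', .inl (b', i')) =>
              obtain ⟨h1, h2⟩ := h
              subst h1
              rcases h2 with ⟨_, hb'⟩ | ⟨hk', _⟩
              · subst hb'
                have hii : i' ≠ i := by
                  intro hh; subst hh; exact hne rfl
                exact ⟨i', by simp [hii]⟩
              · exact absurd hk' hkj
          | some (j', .inr b') =>
              obtain ⟨h1, h2, h3⟩ := h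
              subst h1; subst h3
              exact ⟨i, by simp⟩

lemma not_hasCoopColoring (d : ℕ) (hd : 2 ≤ d) :
    ¬ HasCoopColoring (fun k => H d k) := by
  rintro ⟨I, hind, hcov⟩
  have cover : ∀ v : Vt d, ∃ j, v ∈ I j := Set.iUnion_eq_univ_iff.mp hcov
  -- Lemma A: if no vertex of the clique `D_j^b` lies in `I j`, then `w_j^b ∈ I j`.
  have lemA : ∀ (j : Fin (d+1)) (b : Bool),
      (∀ i : Fin d, (some (j, .inl (b, i)) : Vt d) ∉ I j) →
      (some (j, .inr b) : Vt d) ∈ I j := by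
    intro j b hD
    have hc : ∀ i : Fin d, ∃ k, (some (j, .inl (b, i)) : Vt d) ∈ I k := fun i => cover _
    choose c hcmem using hc
    have hcne : ∀ i, c i ≠ j := by
      intro i hh
      exact hD i (hh ▸ hcmem i)
    have hinj : Function.Injective c := by
      intro i i' hii
      by_contra hne
      exact hind (c i) (hcmem i) (hii ▸ hcmem i') (adj_clique (hcne i) b hne)
    obtain ⟨k, hk⟩ := cover (some (j, .inr b))
    by_cases hkj : k = j
    · exact hkj ▸ hk
    · exfalso
      -- `c` is a bijection onto the colors `≠ j`
      have hbij : Function.Bijective (fun i => (⟨c i, hcne i⟩ : {x : Fin (d+1) // x ≠ j})) := by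
        rw [Fintype.bijective_iff_injective_and_card]
        constructor
        · intro i i' hii
          exact hinj (congrArg Subtype.val hii)
        · simp [Fintype.card_subtype_compl]
      obtain ⟨i, hi⟩ := hbij.surjective ⟨k, hkj⟩
      have hci : c i = k := congrArg Subtype.val hi
      exact hind k hk (hci ▸ hcmem i) ((adj_star (hci ▸ hcne i) b i))
  -- Lemma B: for each color `j`, one of `w_j^false`, `w_j^true` lies in `I j`.
  have lemB : ∀ j : Fin (d+1), ∃ b, (some (j, .inr b) : Vt d) ∈ I j := by
    intro j
    by_contra hW
    push_neg at hW
    have hhit : ∀ b : Bool, ∃ i, (some (j, .inl (b, i)) : Vt d) ∈ I j := by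
      intro b
      by_contra hi
      push_neg at hi
      exact hW b (lemA j b hi)
    obtain ⟨i, hif⟩ := hhit false
    obtain ⟨i', hit⟩ := hhit true
    exact hind j hif hit (adj_bip i i')
  -- the root is not covered
  obtain ⟨j, hr⟩ := cover none
  obtain ⟨b, hw⟩ := lemB j
  exact hind j hr hw (adj_root b)

end CoopCounter

/-- For every integer `d ≥ 2`, there exist `d + 1` graphs on a common finite
vertex set, each of maximum degree at most `d`, with no cooperative coloring. -/
theorem exists_d_add_one_graphs_no_coop_coloring (d : ℕ) (hd : 2 ≤ d) :
    ∃ (n : ℕ) (G : Fin (d + 1) → SimpleGraph (Fin n)),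
      (∀ j, maxDeg (G j) ≤ d) ∧ ¬ HasCoopColoring G := by
  classical
  set e := (Fintype.equivFin (CoopCounter.Vt d)).symm
  refine ⟨Fintype.card (CoopCounter.Vt d),
    fun k => (CoopCounter.H d k).comap e, ?_, ?_⟩
  · intro k
    refine Finset.sup_le fun a _ => ?_
    have hns : ((CoopCounter.H d k).comap e).neighborSet a
        = ⇑e ⁻¹' ((CoopCounter.H d k).neighborSet (e a)) := by
      ext b
      simp [SimpleGraph.comap, SimpleGraph.neighborSet]
    rw [hns]
    have himg : ⇑e ⁻¹' ((CoopCounter.H d k).neighborSet (e a))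
        = ⇑e.symm '' ((CoopCounter.H d k).neighborSet (e a)) := by
      rw [Equiv.image_eq_preimage_symm]
      simp
    rw [himg, Set.ncard_image_of_injective _ e.symm.injective]
    exact CoopCounter.deg_H_le hd k (e a)
  · rintro ⟨I, hind, hcov⟩
    apply CoopCounter.not_hasCoopColoring d hd
    refine ⟨fun j => ⇑e '' I j, ?_, ?_⟩
    · rintro j u hu v hv hadj
      obtain ⟨a, ha, rfl⟩ := hu
      obtain ⟨b, hb, rfl⟩ := hv
      exact hind j ha hb hadj
    · rw [← Set.image_iUnion, hcov, Set.image_univ, Equiv.range_eq_univ]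
end

section
/- The following system of two paths on the vertex set {1,2,3,4} has no cooperative coloring: G_1 is the path with edges {1,2}, {2,3}, {3,4}, and G_2 is the path with edges {1,3}, {3,2}, {2,4}. -/
/-- The first path on the vertex set `{1,2,3,4}` (represented by `Fin 4`, where
vertex `i : Fin 4` stands for `i + 1`), with edges `{1,2}, {2,3}, {3,4}`. -/
def pathOne : SimpleGraph (Fin 4) :=
  SimpleGraph.fromEdgeSet {s(0, 1), s(1, 2), s(2, 3)}

/-- The second path, with edges `{1,3}, {3,2}, {2,4}`. -/
def pathTwo : SimpleGraph (Fin 4) :=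
  SimpleGraph.fromEdgeSet {s(0, 2), s(2, 1), s(1, 3)}

/-- The system of the two paths `1-2-3-4` and `1-3-2-4` on the vertex set
`{1,2,3,4}` has no cooperative coloring. -/
theorem two_paths_no_coop_coloring :
    ¬ HasCoopColoring ![pathOne, pathTwo] := by
  rintro ⟨I, hind, hcov⟩
  have h1 : pathOne.Adj 0 1 ∧ pathOne.Adj 1 2 ∧ pathOne.Adj 2 3 := by
    refine ⟨?_, ?_, ?_⟩ <;> simp [pathOne, SimpleGraph.fromEdgeSet_adj] <;> decide
  have h2 : pathTwo.Adj 0 2 ∧ pathTwo.Adj 2 1 ∧ pathTwo.Adj 1 3 := by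
    refine ⟨?_, ?_, ?_⟩ <;> simp [pathTwo, SimpleGraph.fromEdgeSet_adj] <;> decide
  have hmem : ∀ v : Fin 4, v ∈ I 0 ∨ v ∈ I 1 := by
    intro v
    have : v ∈ ⋃ j, I j := hcov ▸ Set.mem_univ v
    rcases Set.mem_iUnion.mp this with ⟨j, hj⟩
    fin_cases j
    · exact Or.inl hj
    · exact Or.inr hj
  have hi0 : IndepIn pathOne (I 0) := hind 0
  have hi1 : IndepIn pathTwo (I 1) := hind 1
  rcases hmem 1 with h | h
  · rcases hmem 0 with h0 | h0
    · exact hi0 h0 h h1.1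
    · rcases hmem 2 with h2' | h2'
      · exact hi0 h h2' h1.2.1
      · exact hi1 h0 h2' h2.1
  · rcases hmem 2 with h2' | h2'
    · rcases hmem 3 with h3 | h3
      · exact hi0 h2' h3 h1.2.2
      · exact hi1 h h3 h2.2.2
    · exact hi1 h2' h h2.2.1
end

section
/- Suppose F_1, …, F_m are acyclic simple graphs (forests) on the same finite vertex set V, with |V| = n ≥ 1, having no cooperative coloring. Then there exist acyclic simple graphs F'_1, …, F'_m, F'_{m+1} on a common finite vertex set V' with |V'| = n² + n, having no cooperative coloring, such that the maximum degree of F'_i equals the maximum degree of F_i for each i ≤ m, and the maximum degree of F'_{m+1} is at most n. -/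
/-!
Take `n + 1` disjoint copies of `V`, indexed by `Option V`. On `V × Option V` the first `m` forests
are the disjoint unions of copies of the `F i`, and the new forest is a union of `n` disjoint
stars: the star of `v` has centre `(v, none)` and the whole copy `V × {some v}` as leaves. In a
cooperative colouring the class of the new forest must meet every copy, since otherwise the other
classes would cooperatively colour that copy of the `F i`. So it contains some centre `(v, none)`
and some vertex of the copy `some v`, two adjacent vertices of the new forest.
-/

open SimpleGraph

namespace SimpleGraph

variable {V A : Type*} {G : SimpleGraph V}

lemma Walk.apply_eq_of_mem_support {f : V → A} (hf : ∀ ⦃x y⦄, G.Adj x y → f x = f y)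
    {u v : V} (p : G.Walk u v) : ∀ x ∈ p.support, f x = f u := by
  induction p with
  | nil => simp
  | cons h q ih =>
    intro x hx
    rcases List.mem_cons.mp hx with rfl | hx
    · rfl
    · exact (ih x hx).trans (hf h).symm

lemma isAcyclic_of_forall_induce_fiber {f : V → A} (hf : ∀ ⦃x y⦄, G.Adj x y → f x = f y)
    (h : ∀ a, (G.induce (f ⁻¹' {a})).IsAcyclic) : G.IsAcyclic := by
  intro u c hc
  have hs : ∀ x ∈ c.support, x ∈ f ⁻¹' {f u} := c.apply_eq_of_mem_support hf
  refine h (f u) (c.induce _ hs) ?_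
  rwa [← Walk.isCycle_map_iff_of_injective (f := (Embedding.induce (G := G) _).toHom)
    (Embedding.induce (G := G) _).injective, Walk.map_induce]

lemma isAcyclic_of_forall_adj_subsingleton
    (h : ∀ ⦃u v⦄, G.Adj u v → (G.neighborSet u).Subsingleton ∨ (G.neighborSet v).Subsingleton) :
    G.IsAcyclic := by
  rintro u (_ | ⟨hadj, p⟩) hc
  · exact hc.ne_nil rfl
  have not_subsingleton : ∀ x ∈ (Walk.cons hadj p).support, ¬ (G.neighborSet x).Subsingleton := by
    intro x hx hsub
    have h2 := hc.ncard_neighborSet_toSubgraph_eq_two hx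
    have hsub' := hsub.anti ((Walk.cons hadj p).toSubgraph.neighborSet_subset x)
    have h1 := (Set.ncard_le_one_iff hsub'.finite).mpr fun ha hb => hsub' ha hb
    omega
  rcases h hadj with hu | hv
  · exact not_subsingleton _ (Walk.start_mem_support _) hu
  · exact not_subsingleton _ (by simp) hv

def copies (G : SimpleGraph V) (A : Type*) : SimpleGraph (V × A) where
  Adj x y := x.2 = y.2 ∧ G.Adj x.1 y.1
  symm := ⟨fun _ _ h => ⟨h.1.symm, h.2.symm⟩⟩
  loopless := ⟨fun _ h => G.loopless.irrefl _ h.2⟩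

@[simp] lemma copies_adj {x y : V × A} : (copies G A).Adj x y ↔ x.2 = y.2 ∧ G.Adj x.1 y.1 :=
  Iff.rfl

@[simp] lemma comap_copies_mk (a : A) : (copies G A).comap (fun v => (v, a)) = G := by
  ext; simp

lemma neighborSet_copies (v : V) (a : A) :
    (copies G A).neighborSet (v, a) = (fun w => (w, a)) '' G.neighborSet v := by
  ext ⟨w, b⟩
  simp [eq_comm, and_comm]

lemma IsAcyclic.copies (hG : G.IsAcyclic) : (copies G A).IsAcyclic := by
  refine isAcyclic_of_forall_induce_fiber (f := Prod.snd) (fun _ _ h => h.1) fun a => ?_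
  refine hG.comap ⟨fun x => x.1.1, fun h => h.2⟩ fun x y hxy => ?_
  exact Subtype.ext (Prod.ext hxy (x.2.trans y.2.symm))

def starForest (V : Type*) : SimpleGraph (V × Option V) :=
  fromRel fun x y => x.2 = none ∧ y.2 = some x.1

lemma starForest_adj_hub_leaf (v w : V) : (starForest V).Adj (v, none) (w, some v) := by
  simp [starForest]

lemma neighborSet_starForest_leaf (w v : V) :
    (starForest V).neighborSet (w, some v) = {(v, none)} := by
  ext ⟨u, b⟩
  cases b <;> simp [starForest, eq_comm]

lemma neighborSet_starForest_hub (v : V) :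
    (starForest V).neighborSet (v, none) = Set.range fun w => (w, some v) := by
  ext ⟨u, b⟩
  cases b <;> simp [starForest, eq_comm]

lemma isAcyclic_starForest : (starForest V).IsAcyclic := by
  refine isAcyclic_of_forall_adj_subsingleton fun x y hxy => ?_
  obtain ⟨-, ⟨-, hy⟩ | ⟨-, hx⟩⟩ := hxy
  · right
    rw [show y = (y.1, some x.1) from Prod.ext rfl hy, neighborSet_starForest_leaf]
    exact Set.subsingleton_singleton
  · left
    rw [show x = (x.1, some y.1) from Prod.ext rfl hx, neighborSet_starForest_leaf]
    exact Set.subsingleton_singleton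

end SimpleGraph

section MaxDegree

variable {V W : Type*} [Fintype V] [Fintype W]

lemma maxDeg_le {G : SimpleGraph V} {k : ℕ} (h : ∀ v, (G.neighborSet v).ncard ≤ k) :
    maxDeg G ≤ k :=
  Finset.sup_le fun v _ => h v

lemma maxDeg_eq_of_surjective {G : SimpleGraph V} {H : SimpleGraph W} {f : V → W}
    (hf : f.Surjective) (h : ∀ v, (G.neighborSet v).ncard = (H.neighborSet (f v)).ncard) :
    maxDeg G = maxDeg H := by
  classical
  unfold maxDeg
  rw [← Finset.image_univ_of_surjective hf, Finset.sup_image]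
  exact Finset.sup_congr rfl fun v _ => h v

lemma maxDeg_comap_equiv (e : V ≃ W) (G : SimpleGraph W) : maxDeg (G.comap e) = maxDeg G :=
  maxDeg_eq_of_surjective e.surjective fun _ =>
    Set.ncard_preimage_of_injective_subset_range e.injective fun x _ => e.surjective x

lemma maxDeg_copies [Nonempty W] (G : SimpleGraph V) : maxDeg (G.copies W) = maxDeg G :=
  maxDeg_eq_of_surjective Prod.fst_surjective fun ⟨v, a⟩ => by
    rw [neighborSet_copies, Set.ncard_image_of_injective _ (Prod.mk_left_injective a)]

lemma maxDeg_starForest_le : maxDeg (starForest V) ≤ Fintype.card V := by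
  refine maxDeg_le fun ⟨v, a⟩ => ?_
  cases a with
  | none =>
    rw [neighborSet_starForest_hub, Set.ncard_range_of_injective (Prod.mk_left_injective _),
      Nat.card_eq_fintype_card]
  | some w =>
    rw [neighborSet_starForest_leaf, Set.ncard_singleton]
    exact Fintype.card_pos_iff.mpr ⟨v⟩

end MaxDegree

section CooperativeColoring

variable {V W : Type*} {m : ℕ}

lemma IndepIn.comap {G : SimpleGraph W} {I : Set W} (h : IndepIn G I) (f : V → W) :
    IndepIn (G.comap f) (f ⁻¹' I) :=
  fun _ hu _ hv => h hu hv

lemma HasCoopColoring.comap {G : Fin m → SimpleGraph W} (h : HasCoopColoring G) (f : V → W) :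
    HasCoopColoring fun j => (G j).comap f := by
  obtain ⟨I, hind, hcov⟩ := h
  refine ⟨fun j => f ⁻¹' I j, fun j => (hind j).comap f, ?_⟩
  rw [← Set.preimage_iUnion, hcov, Set.preimage_univ]

lemma not_hasCoopColoring_snoc_starForest {F : Fin m → SimpleGraph V}
    (hF : ¬ HasCoopColoring F) :
    ¬ HasCoopColoring
      (Fin.snoc (fun i => (F i).copies (Option V)) (starForest V) : Fin (m + 1) → _) := by
  rintro ⟨I, hind, hcov⟩
  have meets_every_copy : ∀ a : Option V, ∃ v, (v, a) ∈ I (Fin.last m) := by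
    intro a
    by_contra! hmiss
    refine hF ⟨fun i => (·, a) ⁻¹' I i.castSucc, fun i => ?_, ?_⟩
    · simpa using (hind i.castSucc).comap (·, a)
    · refine Set.eq_univ_of_forall fun v => ?_
      obtain ⟨j, hj⟩ := Set.mem_iUnion.mp (hcov ▸ Set.mem_univ (v, a))
      induction j using Fin.lastCases with
      | last => exact absurd hj (hmiss v)
      | cast i => exact Set.mem_iUnion.mpr ⟨i, hj⟩
  obtain ⟨v, hv⟩ := meets_every_copy none
  obtain ⟨w, hw⟩ := meets_every_copy (some v)
  have hlast := hind (Fin.last m)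
  rw [Fin.snoc_last] at hlast
  exact hlast hv hw (starForest_adj_hub_leaf v w)

end CooperativeColoring

theorem forests_no_coop_coloring_step_general (m n : ℕ)
    (V : Type*) [Fintype V] (hcard : Fintype.card V = n)
    (F : Fin m → SimpleGraph V) (hacyc : ∀ i, (F i).IsAcyclic)
    (hno : ¬ HasCoopColoring F) :
    ∃ F' : Fin (m + 1) → SimpleGraph (Fin (n ^ 2 + n)),
      (∀ i, (F' i).IsAcyclic) ∧
      ¬ HasCoopColoring F' ∧
      (∀ i : Fin m, maxDeg (F' i.castSucc) = maxDeg (F i)) ∧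
      maxDeg (F' (Fin.last m)) ≤ n := by
  let G : Fin (m + 1) → SimpleGraph (V × Option V) :=
    Fin.snoc (fun i => (F i).copies (Option V)) (starForest V)
  have hcardW : Fintype.card (V × Option V) = n ^ 2 + n := by simp [hcard]; ring
  let e : Fin (n ^ 2 + n) ≃ V × Option V := (Fintype.equivFinOfCardEq hcardW).symm
  refine ⟨fun j => (G j).comap e, fun j => ?_, fun h => ?_, fun i => ?_, ?_⟩
  · refine IsAcyclic.of_comap e.toEmbedding ?_
    induction j using Fin.lastCases with
    | last => simpa [G] using isAcyclic_starForest
    | cast i => simpa [G] using (hacyc i).copies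
  · refine not_hasCoopColoring_snoc_starForest hno ?_
    simpa [SimpleGraph.comap_comap] using h.comap e.symm
  · rw [maxDeg_comap_equiv]
    simpa [G] using maxDeg_copies (F i)
  · rw [maxDeg_comap_equiv, ← hcard]
    simpa [G] using maxDeg_starForest_le

/-- From `m` forests on `n ≥ 1` vertices with no cooperative coloring, one can
construct `m + 1` forests on `n² + n` vertices with no cooperative coloring,
preserving the maximum degrees of the first `m` forests, and such that the new
forest has maximum degree at most `n`. -/
theorem forests_no_coop_coloring_step (m n : ℕ) (hn : 1 ≤ n)
    (V : Type*) [Fintype V] (hcard : Fintype.card V = n)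
    (F : Fin m → SimpleGraph V) (hacyc : ∀ i, (F i).IsAcyclic)
    (hno : ¬ HasCoopColoring F) :
    ∃ F' : Fin (m + 1) → SimpleGraph (Fin (n ^ 2 + n)),
      (∀ i, (F' i).IsAcyclic) ∧
      ¬ HasCoopColoring F' ∧
      (∀ i : Fin m, maxDeg (F' i.castSucc) = maxDeg (F i)) ∧
      maxDeg (F' (Fin.last m)) ≤ n :=
  forests_no_coop_coloring_step_general m n V hcard F hacyc hno
end

section
/- For every integer m ≥ 2, there exists a finite vertex set V and a system of m trees T_1, …, T_m on V (connected acyclic simple graphs on V), each of maximum degree at most 2^(2^(m-1)), that has no cooperative coloring. -/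
open Function SimpleGraph

variable {V W : Type*}

section CoopColoring

variable {m : ℕ} {G : Fin m → SimpleGraph V}

lemma IndepIn.preimage {G : SimpleGraph V} {H : SimpleGraph W} {I : Set W} (hI : IndepIn H I)
    (f : V → W) (hf : ∀ ⦃u v⦄, G.Adj u v → H.Adj (f u) (f v)) : IndepIn G (f ⁻¹' I) :=
  fun _ hu _ hv huv => hI hu hv (hf huv)

lemma isCoopColoring_preimage {H : Fin m → SimpleGraph W} {I : Fin m → Set W} (f : V → W)
    (hf : ∀ i ⦃u v⦄, (G i).Adj u v → (H i).Adj (f u) (f v)) (hI : ∀ i, IndepIn (H i) (I i))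
    (hcover : ∀ v, ∃ i, f v ∈ I i) : IsCoopColoring G fun i => f ⁻¹' I i :=
  ⟨fun i => (hI i).preimage f (hf i),
    Set.eq_univ_of_forall fun v => Set.mem_iUnion.2 (hcover v)⟩

lemma HasCoopColoring.of_hom {H : Fin m → SimpleGraph W} (hH : HasCoopColoring H) (f : V → W)
    (hf : ∀ i ⦃u v⦄, (G i).Adj u v → (H i).Adj (f u) (f v)) : HasCoopColoring G := by
  obtain ⟨I, hI, hcover⟩ := hH
  exact ⟨_, isCoopColoring_preimage f hf hI fun v => Set.mem_iUnion.1 (hcover ▸ Set.mem_univ (f v))⟩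

lemma IsCoopColoring.hasCoopColoring_of_hom_succ {H : Fin (m + 1) → SimpleGraph W}
    {I : Fin (m + 1) → Set W} (hI : IsCoopColoring H I) (f : V → W)
    (hf : ∀ i ⦃u v⦄, (G i).Adj u v → (H i.succ).Adj (f u) (f v)) (hmiss : ∀ v, f v ∉ I 0) :
    HasCoopColoring G := by
  refine ⟨_, isCoopColoring_preimage f hf (fun i => hI.1 i.succ) fun v => ?_⟩
  obtain ⟨j, hj⟩ := Set.mem_iUnion.1 (hI.2 ▸ Set.mem_univ (f v))
  cases j using Fin.cases with
  | zero => exact absurd hj (hmiss v)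
  | succ i => exact ⟨i, hj⟩

end CoopColoring

section ParentGraph

def parentGraph (p : V → V) : SimpleGraph V := SimpleGraph.fromRel fun v w => p v = w

structure IsParentMap (p : V → V) (r : V) : Prop where
  map_root : p r = r
  exists_iterate_eq_root (v : V) : ∃ n, p^[n] v = r

variable {p : V → V} {r : V}

lemma parentGraph_adj {v w : V} : (parentGraph p).Adj v w ↔ v ≠ w ∧ (p v = w ∨ p w = v) :=
  fromRel_adj _ _ _

lemma parentGraph_adj_apply {v : V} (h : p v ≠ v) : (parentGraph p).Adj v (p v) :=
  parentGraph_adj.2 ⟨h.symm, .inl rfl⟩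

lemma reachable_parentGraph_of_iterate_eq {v : V} {n : ℕ} (h : p^[n] v = r) :
    (parentGraph p).Reachable v r := by
  induction n generalizing v with
  | zero => exact h ▸ .rfl
  | succ n ih =>
    refine .trans ?_ (ih h)
    by_cases hv : p v = v
    · rw [hv]
    · exact (parentGraph_adj_apply hv).reachable

lemma exists_iterate_eq_of_walk {a x y : V} (w : (parentGraph p).Walk x y)
    (ha : s(a, p a) ∉ w.edges) (hx : ∃ n, p^[n] x = a) : ∃ n, p^[n] y = a := by
  induction w with
  | nil => exact hx
  | @cons x x' y hadj w ih =>
    rw [Walk.edges_cons, List.mem_cons, not_or] at ha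
    refine ih ha.2 ?_
    obtain ⟨hne, hpx | hpx'⟩ := parentGraph_adj.1 hadj
    · obtain ⟨_ | n, hn⟩ := hx
      · subst hn hpx
        exact absurd rfl ha.1
      · exact ⟨n, by rwa [iterate_succ_apply, hpx] at hn⟩
    · obtain ⟨n, hn⟩ := hx
      exact ⟨n + 1, by rw [iterate_succ_apply, hpx', hn]⟩

namespace IsParentMap

lemma reachable (hp : IsParentMap p r) (v : V) : (parentGraph p).Reachable v r :=
  reachable_parentGraph_of_iterate_eq (hp.exists_iterate_eq_root v).choose_spec

lemma connected (hp : IsParentMap p r) : (parentGraph p).Connected :=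
  have : Nonempty V := ⟨r⟩
  ⟨fun u v => (hp.reachable u).trans (hp.reachable v).symm⟩

lemma eq_root_of_isPeriodicPt (hp : IsParentMap p r) {a : V} {n : ℕ} (hn : 0 < n)
    (ha : IsPeriodicPt p n a) : a = r := by
  obtain ⟨k, hk⟩ := hp.exists_iterate_eq_root a
  have hle : k ≤ n * k := Nat.le_mul_of_pos_left k hn
  calc a = p^[n * k] a := ((ha.mul_const k).eq).symm
    _ = p^[n * k - k] (p^[k] a) := by rw [← iterate_add_apply, Nat.sub_add_cancel hle]
    _ = r := by rw [hk, iterate_fixed hp.map_root]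

lemma isAcyclic (hp : IsParentMap p r) : (parentGraph p).IsAcyclic := by
  rw [isAcyclic_iff_forall_adj_isBridge]
  suffices h : ∀ a, p a ≠ a → (parentGraph p).IsBridge s(a, p a) by
    intro v w hvw
    rcases parentGraph_adj.1 hvw with ⟨hne, rfl | rfl⟩
    · exact h v hne.symm
    · exact Sym2.eq_swap ▸ h w hne
  intro a hpa
  rw [isBridge_iff_forall_walk_mem_edges]
  intro w
  by_contra hw
  -- a walk from `a` to `p a` avoiding their edge would make `a` a descendant of its own parent
  obtain ⟨n, hn⟩ := exists_iterate_eq_of_walk w hw ⟨0, rfl⟩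
  have ha : a = r := hp.eq_root_of_isPeriodicPt n.succ_pos <| by
    rwa [IsPeriodicPt, IsFixedPt, iterate_succ_apply]
  exact hpa (ha ▸ hp.map_root)

lemma isTree (hp : IsParentMap p r) : (parentGraph p).IsTree :=
  ⟨hp.connected, hp.isAcyclic⟩

end IsParentMap

end ParentGraph

section Degree

lemma maxDeg_le_iff [Fintype V] {G : SimpleGraph V} {D : ℕ} :
    maxDeg G ≤ D ↔ ∀ v, (G.neighborSet v).ncard ≤ D :=
  Finset.sup_le_iff.trans (by simp)

lemma SimpleGraph.Iso.maxDeg_eq [Fintype V] [Fintype W] {G : SimpleGraph V} {G' : SimpleGraph W}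
    (f : G ≃g G') : maxDeg G = maxDeg G' := by
  have hcard (v : V) : (G'.neighborSet (f v)).ncard = (G.neighborSet v).ncard := by
    simp only [← Nat.card_coe_set_eq]
    exact Nat.card_congr (f.mapNeighborSet v).symm
  rw [maxDeg, maxDeg, ← Finset.map_univ_equiv f.toEquiv, Finset.sup_map]
  exact Finset.sup_congr rfl fun v _ => (hcard v).symm

lemma ncard_le_add_of_subset_image_union {U : Type*} [Finite V] [Finite U] [Finite W]
    {s : Set W} {A : Set V} {B : Set U} {f : V → W} {g : U → W} (h : s ⊆ f '' A ∪ g '' B) :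
    s.ncard ≤ A.ncard + B.ncard :=
  calc s.ncard ≤ (f '' A ∪ g '' B).ncard := Set.ncard_le_ncard h
    _ ≤ (f '' A).ncard + (g '' B).ncard := Set.ncard_union_le _ _
    _ ≤ A.ncard + B.ncard :=
      Nat.add_le_add (Set.ncard_image_le A.toFinite) (Set.ncard_image_le B.toFinite)

end Degree

section Blowup

variable {p : V → V} {r : V}

/-- `Option V × V` is `N + 1` blobs of `V`, `none` indexing the central one. -/
def hubParent (p : V → V) : Option V × V → Option V × V
  | (none, v) => (none, p v)
  | (some u, _) => (none, u)

lemma IsParentMap.hub (hp : IsParentMap p r) : IsParentMap (hubParent p) (none, r) := by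
  have hsemi : Semiconj (Prod.mk none) p (hubParent p) := fun _ => rfl
  have hblob (v : V) : ∃ n, (hubParent p)^[n] (none, v) = (none, r) := by
    obtain ⟨n, hn⟩ := hp.exists_iterate_eq_root v
    exact ⟨n, by rw [← hsemi.iterate_right, hn]⟩
  refine ⟨congrArg _ hp.map_root, fun ⟨b, v⟩ => ?_⟩
  cases b with
  | none => exact hblob v
  | some u =>
    obtain ⟨n, hn⟩ := hblob u
    exact ⟨n + 1, hn⟩

lemma IndepIn.exists_blob_disjoint {I : Set (Option V × V)}
    (hI : IndepIn (parentGraph (hubParent p)) I) : ∃ b, ∀ v, (b, v) ∉ I := by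
  by_cases h : ∃ u, (none, u) ∈ I
  · obtain ⟨u, hu⟩ := h
    exact ⟨some u, fun c hc => hI hc hu (parentGraph_adj.2 ⟨by simp, .inl rfl⟩)⟩
  · exact ⟨none, fun v hv => h ⟨v, hv⟩⟩

lemma maxDeg_hubParent_le [Fintype V] :
    maxDeg (parentGraph (hubParent p)) ≤ maxDeg (parentGraph p) + Fintype.card V := by
  rw [maxDeg_le_iff]
  rintro ⟨_ | u, v⟩
  · have hsub : (parentGraph (hubParent p)).neighborSet (none, v) ⊆
        Prod.mk none '' (parentGraph p).neighborSet v ∪ Prod.mk (some v) '' Set.univ := by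
      rintro ⟨_ | c, w⟩ h <;> simp_all [parentGraph_adj, hubParent]
    refine (ncard_le_add_of_subset_image_union hsub).trans (Nat.add_le_add ?_ ?_)
    · exact maxDeg_le_iff.1 le_rfl v
    · rw [Set.ncard_univ, Nat.card_eq_fintype_card]
  · have hsub : (parentGraph (hubParent p)).neighborSet (some u, v) ⊆ {(none, u)} := by
      rintro ⟨_ | c, w⟩ h <;> simp_all [parentGraph_adj, hubParent]
    refine (Set.ncard_le_ncard hsub).trans ?_
    rw [Set.ncard_singleton]
    exact le_add_left (Fintype.card_pos_iff.2 ⟨u⟩)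

variable [DecidableEq V]

def blowupParent (p : V → V) (r : V) (x : Option V × V) : Option V × V :=
  if x.2 = r then (none, r) else (x.1, p x.2)

lemma IsParentMap.blowup (hp : IsParentMap p r) :
    IsParentMap (blowupParent p r) (none, r) := by
  refine ⟨if_pos rfl, fun ⟨b, v⟩ => ?_⟩
  obtain ⟨n, hn⟩ := hp.exists_iterate_eq_root v
  induction n generalizing v with
  | zero => exact ⟨1, if_pos hn⟩
  | succ n ih =>
    by_cases hv : v = r
    · exact ⟨1, if_pos hv⟩
    · obtain ⟨k, hk⟩ := ih (p v) hn
      exact ⟨k + 1, by rwa [iterate_succ_apply, blowupParent, if_neg hv]⟩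

lemma parentGraph_blowupParent_adj (hr : p r = r) (b : Option V) {v w : V}
    (h : (parentGraph p).Adj v w) : (parentGraph (blowupParent p r)).Adj (b, v) (b, w) := by
  have hlift {v w : V} (hne : v ≠ w) (hvw : p v = w) : blowupParent p r (b, v) = (b, w) := by
    have hv : v ≠ r := by rintro rfl; exact hne (hr ▸ hvw)
    simp [blowupParent, hv, hvw]
  obtain ⟨hne, hvw | hwv⟩ := parentGraph_adj.1 h
  · exact parentGraph_adj.2 ⟨by simpa using hne, .inl (hlift hne hvw)⟩
  · exact parentGraph_adj.2 ⟨by simpa using hne, .inr (hlift hne.symm hwv)⟩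

lemma maxDeg_blowupParent_le [Fintype V] :
    maxDeg (parentGraph (blowupParent p r)) ≤ maxDeg (parentGraph p) + Fintype.card V := by
  rw [maxDeg_le_iff]
  rintro ⟨b, v⟩
  have hsub : (parentGraph (blowupParent p r)).neighborSet (b, v) ⊆
      Prod.mk b '' (parentGraph p).neighborSet v ∪ (fun c => (c, r)) '' {c | c ≠ b} := by
    rintro ⟨c, w⟩ h
    simp only [mem_neighborSet, parentGraph_adj, blowupParent] at h
    simp only [Set.mem_union, Set.mem_image, mem_neighborSet, parentGraph_adj, Prod.mk.injEq]
    split_ifs at h <;> aesop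
  refine (ncard_le_add_of_subset_image_union hsub).trans (Nat.add_le_add ?_ ?_)
  · exact maxDeg_le_iff.1 le_rfl v
  · rw [← Set.compl_singleton_eq, Set.ncard_compl, Set.ncard_singleton, Nat.card_eq_fintype_card,
      Fintype.card_option, Nat.add_sub_cancel]

end Blowup

section System

variable [DecidableEq V] {k : ℕ} {p : Fin (k + 1) → V → V} {r : V}

def blowupSystem (p : Fin (k + 1) → V → V) (r : V) : Fin (k + 2) → Option V × V → Option V × V :=
  Fin.cons (hubParent (p 0)) fun i => blowupParent (p i) r

lemma isParentMap_blowupSystem (hp : ∀ i, IsParentMap (p i) r) (i : Fin (k + 2)) :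
    IsParentMap (blowupSystem p r i) (none, r) := by
  cases i using Fin.cases with
  | zero => exact (hp 0).hub
  | succ i => exact (hp i).blowup

lemma maxDeg_blowupSystem_le [Fintype V] {D : ℕ} (hD : ∀ i, maxDeg (parentGraph (p i)) ≤ D)
    (i : Fin (k + 2)) : maxDeg (parentGraph (blowupSystem p r i)) ≤ D + Fintype.card V := by
  cases i using Fin.cases with
  | zero => exact maxDeg_hubParent_le.trans (Nat.add_le_add_right (hD 0) _)
  | succ i => exact maxDeg_blowupParent_le.trans (Nat.add_le_add_right (hD i) _)

lemma not_hasCoopColoring_blowupSystem (hr : ∀ i, p i r = r)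
    (hp : ¬ HasCoopColoring fun i => parentGraph (p i)) :
    ¬ HasCoopColoring fun i => parentGraph (blowupSystem p r i) := by
  rintro ⟨I, hI⟩
  obtain ⟨b, hb⟩ := (hI.1 0).exists_blob_disjoint
  exact hp (hI.hasCoopColoring_of_hom_succ (Prod.mk b)
    (fun i _ _ => parentGraph_blowupParent_adj (hr i) b) hb)

end System

lemma card_blowup_add_le {N D : ℕ} (hD : 2 ≤ D) (h : N + D ≤ D ^ 2) :
    (N + 1) * N + D ^ 2 ≤ (D ^ 2) ^ 2 := by
  nlinarith

lemma exists_parentMaps_not_hasCoopColoring (k : ℕ) :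
    ∃ (V : Type) (_ : Fintype V) (r : V) (p : Fin (k + 1) → V → V),
      (∀ i, IsParentMap (p i) r) ∧ (∀ i, maxDeg (parentGraph (p i)) ≤ 2 ^ 2 ^ k) ∧
      Fintype.card V + 2 ^ 2 ^ k ≤ 2 ^ 2 ^ (k + 1) ∧
      ¬ HasCoopColoring fun i => parentGraph (p i) := by
  induction k with
  | zero =>
    refine ⟨Bool, inferInstance, false, fun _ _ => false, fun _ => ⟨rfl, fun _ => ⟨1, rfl⟩⟩,
      fun _ => ?_, le_rfl, ?_⟩
    · exact maxDeg_le_iff.2 fun v => (Set.ncard_le_card _).trans (by simp)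
    · rintro ⟨I, hI, hcover⟩
      have hall (v : Bool) : v ∈ I 0 := by
        obtain ⟨i, hi⟩ := Set.mem_iUnion.1 (hcover ▸ Set.mem_univ v)
        rwa [Fin.fin_one_eq_zero i] at hi
      exact hI 0 (hall true) (hall false) (parentGraph_adj.2 ⟨by decide, .inl rfl⟩)
  | succ k ih =>
    classical
    obtain ⟨V, _, r, p, hp, hdeg, hcard, hnc⟩ := ih
    have hsq (j : ℕ) : 2 ^ 2 ^ (j + 1) = (2 ^ 2 ^ j) ^ 2 := by rw [pow_succ, pow_mul]
    have hD : 2 ≤ 2 ^ 2 ^ k := Nat.le_self_pow (by positivity) 2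
    rw [hsq] at hcard
    rw [hsq (k + 1), hsq k]
    refine ⟨Option V × V, inferInstance, (none, r), blowupSystem p r, isParentMap_blowupSystem hp,
      fun i => (maxDeg_blowupSystem_le hdeg i).trans (by omega), ?_,
      not_hasCoopColoring_blowupSystem (fun i => (hp i).map_root) hnc⟩
    rw [Fintype.card_prod, Fintype.card_option]
    exact card_blowup_add_le hD hcard

/-- For every `m ≥ 2` there are `m` trees on a common finite vertex set, each
of maximum degree at most `2 ^ 2 ^ (m - 1)`, with no cooperative coloring. -/
theorem exists_trees_no_coop_coloring (m : ℕ) (hm : 2 ≤ m) :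
    ∃ (n : ℕ) (T : Fin m → SimpleGraph (Fin n)),
      (∀ i, (T i).IsTree) ∧
      (∀ i, maxDeg (T i) ≤ 2 ^ 2 ^ (m - 1)) ∧
      ¬ HasCoopColoring T := by
  obtain ⟨k, rfl⟩ : ∃ k, m = k + 1 := ⟨m - 1, by omega⟩
  obtain ⟨V, _, r, p, hp, hdeg, -, hnc⟩ := exists_parentMaps_not_hasCoopColoring k
  let e : Fin (Fintype.card V) ≃ V := (Fintype.equivFin V).symm
  refine ⟨Fintype.card V, fun i => (parentGraph (p i)).comap e, fun i => ?_, fun i => ?_, ?_⟩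
  · exact (Iso.comap e _).isTree_iff.2 (hp i).isTree
  · rw [(Iso.comap e _).maxDeg_eq, Nat.add_sub_cancel]
    exact hdeg i
  · exact fun h => hnc (h.of_hom e.symm fun i u v huv => by simpa using huv)
end

section
/- Let m, d be positive integers with e · 2md · (3/4)^m ≤ 1 (where e is Euler's number). Then every system of m acyclic simple graphs (forests) F_1, …, F_m on the same finite vertex set V, each of maximum degree at most d, has a cooperative coloring. -/
open Finset

section Independence

variable {ι : Type*} [Fintype ι] [DecidableEq ι] {β : ι → Type*} [∀ i, Fintype (β i)]
  [∀ i, DecidableEq (β i)]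

theorem card_inter_mul_card_eq {E F : Finset (∀ i, β i)} {s : Finset ι}
    (hE : DependsOn (· ∈ E) (s : Set ι)) (hF : DependsOn (· ∈ F) (↑sᶜ : Set ι)) :
    #(E ∩ F) * Fintype.card (∀ i, β i) = #E * #F := by
  have hmemE : ∀ ω η : ∀ i, β i, s.piecewise ω η ∈ E ↔ ω ∈ E := fun ω η =>
    (hE fun i hi => s.piecewise_eq_of_mem ω η hi).to_iff
  have hmemF : ∀ ω η : ∀ i, β i, s.piecewise ω η ∈ F ↔ η ∈ F := fun ω η =>
    (hF fun i hi => s.piecewise_eq_of_notMem ω η (mem_compl.mp hi)).to_iff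
  have hinv : ∀ ω η : ∀ i, β i,
      s.piecewise (s.piecewise ω η) (s.piecewise η ω) = ω := by
    intro ω η
    ext i
    by_cases hi : i ∈ s <;> simp [hi]
  rw [← card_univ, ← card_product, ← card_product]
  refine card_nbij' (fun p => (s.piecewise p.1 p.2, s.piecewise p.2 p.1))
    (fun p => (s.piecewise p.1 p.2, s.piecewise p.2 p.1)) ?_ ?_ ?_ ?_
  · rintro ⟨ω, η⟩ h
    simp only [coe_product, Set.mem_prod, coe_inter, Set.mem_inter_iff, mem_coe] at h ⊢
    exact ⟨(hmemE ω η).mpr h.1.1, (hmemF η ω).mpr h.1.2⟩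
  · rintro ⟨ω, η⟩ h
    simp only [coe_product, Set.mem_prod, coe_inter, Set.mem_inter_iff, mem_coe, coe_univ,
      Set.mem_univ, and_true] at h ⊢
    exact ⟨(hmemE ω η).mpr h.1, (hmemF ω η).mpr h.2⟩
  · rintro ⟨ω, η⟩ -
    simp [hinv]
  · rintro ⟨ω, η⟩ -
    simp [hinv]

variable [∀ i, Nonempty (β i)]

theorem card_inf_le_pow_mul {κ : Type*} [DecidableEq κ] {B : κ → Finset (∀ i, β i)}
    {T : κ → Finset ι} (hB : ∀ k, DependsOn (· ∈ B k) (T k : Set ι)) {t : Finset κ}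
    (ht : (t : Set κ).PairwiseDisjoint T) {q : ℝ}
    (hq : ∀ k ∈ t, (#(B k) : ℝ) ≤ q * Fintype.card (∀ i, β i)) :
    (#(t.inf B) : ℝ) ≤ q ^ #t * Fintype.card (∀ i, β i) := by
  induction t using Finset.induction_on with
  | empty => simp
  | @insert k t hk ih =>
    have hN : (0 : ℝ) < Fintype.card (∀ i, β i) := by exact_mod_cast Fintype.card_pos
    have hdep : DependsOn (· ∈ t.inf B) (↑(T k)ᶜ : Set ι) := by
      intro ω η h
      simp only [mem_inf]
      refine propext (forall₂_congr fun j hj => (hB j fun i hi => h i ?_).to_iff)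
      refine mem_compl.mpr fun hik => Finset.disjoint_left.mp ?_ hi hik
      exact ht (by simp [hj]) (by simp) (fun hjk => hk (hjk ▸ hj))
    have hprod := card_inter_mul_card_eq (hB k) hdep
    rw [inf_insert, card_insert_of_notMem hk]
    refine le_of_mul_le_mul_right ?_ hN
    calc (#(B k ⊓ t.inf B) : ℝ) * Fintype.card (∀ i, β i) = #(B k) * #(t.inf B) := by
          exact_mod_cast hprod
      _ ≤ (q * Fintype.card (∀ i, β i)) * (q ^ #t * Fintype.card (∀ i, β i)) :=
          mul_le_mul (hq k (mem_insert_self k t))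
            (ih (ht.subset (by simp)) fun j hj => hq j (mem_insert_of_mem hj))
            (by positivity) ((Nat.cast_nonneg _).trans (hq k (mem_insert_self k t)))
      _ = q ^ (#t + 1) * Fintype.card (∀ i, β i) * Fintype.card (∀ i, β i) := by ring

end Independence

theorem card_filter_forall_eq_mul_pow {κ γ : Type*} [Fintype κ] [DecidableEq κ] [Fintype γ]
    [DecidableEq γ] (T : Finset κ) (y : κ → γ) :
    #{ω : κ → γ | ∀ c ∈ T, ω c = y c} * Fintype.card γ ^ #T =
      Fintype.card γ ^ Fintype.card κ := by
  have h : ({ω : κ → γ | ∀ c ∈ T, ω c = y c} : Finset (κ → γ)) =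
      Fintype.piFinset fun c => if c ∈ T then {y c} else univ := by
    ext ω
    simp only [mem_filter, mem_univ, true_and, Fintype.mem_piFinset]
    refine forall_congr' fun c => ?_
    split_ifs with hc <;> simp [hc]
  simp only [h, Fintype.card_piFinset, apply_ite card, card_singleton, card_univ, prod_ite,
    prod_const_one, one_mul, prod_const, ← pow_add]
  rw [filter_notMem_eq_sdiff, ← compl_eq_univ_sdiff, card_compl_add_card]

section LocalLemma

variable {ι : Type*} [Fintype ι] [DecidableEq ι] {β : ι → Type*} [∀ i, Fintype (β i)]
  [∀ i, DecidableEq (β i)] {α : Type*} {A : α → Finset (∀ i, β i)}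

theorem dependsOn_mem_compl_sup {S : Finset α} {s : Set ι}
    (hA : ∀ a ∈ S, DependsOn (· ∈ A a) s) : DependsOn (· ∈ (S.sup A)ᶜ) s := by
  intro ω η h
  simp only [mem_compl, mem_sup]
  exact propext (not_congr (exists_congr fun a =>
    and_congr_right fun ha => (hA a ha h).to_iff))

theorem card_inter_compl_sup_le_of_disjoint [∀ i, Nonempty (β i)] {vbl : α → Finset ι}
    (hA : ∀ a, DependsOn (· ∈ A a) (vbl a : Set ι)) {a : α} {q : ℝ}
    (hq : (#(A a) : ℝ) ≤ q * Fintype.card (∀ i, β i)) {S : Finset α}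
    (hS : ∀ b ∈ S, Disjoint (vbl a) (vbl b)) :
    (#(A a ∩ (S.sup A)ᶜ) : ℝ) ≤ q * #(S.sup A)ᶜ := by
  have hN : (0 : ℝ) < Fintype.card (∀ i, β i) := by exact_mod_cast Fintype.card_pos
  have hdep : DependsOn (· ∈ (S.sup A)ᶜ) (↑(vbl a)ᶜ : Set ι) :=
    dependsOn_mem_compl_sup fun b hb => (hA b).mono fun i hi =>
      mem_compl.mpr fun hia => Finset.disjoint_left.mp (hS b hb) hia hi
  have hprod :
      (#(A a ∩ (S.sup A)ᶜ) : ℝ) * Fintype.card (∀ i, β i) = #(A a) * #(S.sup A)ᶜ := by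
    exact_mod_cast card_inter_mul_card_eq (hA a) hdep
  refine le_of_mul_le_mul_right ?_ hN
  rw [hprod, mul_right_comm]
  exact mul_le_mul_of_nonneg_right hq (Nat.cast_nonneg _)

variable [DecidableEq α]

theorem card_compl_sup_insert (a : α) (S : Finset α) :
    (#((insert a S).sup A)ᶜ : ℝ) = #(S.sup A)ᶜ - #(A a ∩ (S.sup A)ᶜ) := by
  have h := card_sdiff_add_card_inter (S.sup A)ᶜ (A a)
  rw [sup_insert, compl_sup, inf_eq_inter, inter_comm, ← sdiff_eq_inter_compl, inter_comm, ← h]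
  push_cast
  ring

theorem one_sub_pow_mul_card_compl_sup_le {x : ℝ} (hx : x ≤ 1) {W T : Finset α}
    (h : ∀ U ⊆ T, ∀ b ∈ T, b ∉ U →
      (#(A b ∩ ((W ∪ U).sup A)ᶜ) : ℝ) ≤ x * #((W ∪ U).sup A)ᶜ) :
    (1 - x) ^ #T * #(W.sup A)ᶜ ≤ (#((W ∪ T).sup A)ᶜ : ℝ) := by
  induction T using Finset.induction_on with
  | empty => simp
  | @insert b T hb ih =>
    have hT := ih fun U hU c hc hcU => h U (hU.trans (subset_insert b T)) c
      (mem_insert_of_mem hc) hcU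
    have hstep := h T (subset_insert b T) b (mem_insert_self b T) hb
    rw [union_insert, card_compl_sup_insert, card_insert_of_notMem hb, pow_succ', mul_assoc]
    calc (1 - x) * ((1 - x) ^ #T * #(W.sup A)ᶜ) ≤ (1 - x) * #((W ∪ T).sup A)ᶜ :=
          mul_le_mul_of_nonneg_left hT (by linarith)
      _ ≤ _ := by linarith

variable [∀ i, Nonempty (β i)] [Fintype α] {vbl : α → Finset ι}

theorem card_inter_compl_sup_le (hA : ∀ a, DependsOn (· ∈ A a) (vbl a : Set ι)) {x : ℝ}
    (hx₀ : 0 ≤ x) (hx₁ : x ≤ 1) {D : ℕ}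
    (hA_card : ∀ a, (#(A a) : ℝ) ≤ x * (1 - x) ^ D * Fintype.card (∀ i, β i))
    (hdep : ∀ a, #{b | b ≠ a ∧ ¬Disjoint (vbl a) (vbl b)} ≤ D)
    (S : Finset α) {a : α} (ha : a ∉ S) :
    (#(A a ∩ (S.sup A)ᶜ) : ℝ) ≤ x * #(S.sup A)ᶜ := by
  induction S using Finset.strongInduction generalizing a with
  | H S ih =>
  set S₁ := S.filter fun b => ¬Disjoint (vbl a) (vbl b)
  set S₂ := S.filter fun b => Disjoint (vbl a) (vbl b)
  have hS : S₂ ∪ S₁ = S := filter_union_filter_not_eq _ S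
  have hS₁ : #S₁ ≤ D := (card_le_card fun b hb => by
    simp only [S₁, mem_filter, mem_univ, true_and] at hb ⊢
    exact ⟨fun hba => ha (hba ▸ hb.1), hb.2⟩).trans (hdep a)
  have hind := card_inter_compl_sup_le_of_disjoint hA (hA_card a) (S := S₂)
    fun b hb => (mem_filter.mp hb).2
  -- every set `S₂ ∪ U` met by the chain is a proper subset of `S`
  have hchain : (1 - x) ^ #S₁ * #(S₂.sup A)ᶜ ≤ (#((S₂ ∪ S₁).sup A)ᶜ : ℝ) :=
    one_sub_pow_mul_card_compl_sup_le hx₁ fun U hU b hb hbU => by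
      have hbS₂ : b ∉ S₂ := fun hb₂ => (mem_filter.mp hb).2 (mem_filter.mp hb₂).2
      refine ih _ ((ssubset_iff_of_subset ?_).mpr ⟨b, (mem_filter.mp hb).1, ?_⟩) ?_
      · exact hS ▸ union_subset_union_right hU
      all_goals simp [hbS₂, hbU]
  have hmono : (#(A a ∩ (S.sup A)ᶜ) : ℝ) ≤ #(A a ∩ (S₂.sup A)ᶜ) := by
    gcongr
    exact hS ▸ subset_union_left
  have hpow : (1 - x) ^ D ≤ (1 - x) ^ #S₁ :=
    pow_le_pow_of_le_one (by linarith) (by linarith) hS₁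
  calc (#(A a ∩ (S.sup A)ᶜ) : ℝ) ≤ x * (1 - x) ^ D * #(S₂.sup A)ᶜ := hmono.trans hind
    _ ≤ x * ((1 - x) ^ #S₁ * #(S₂.sup A)ᶜ) := by
      rw [mul_assoc]; gcongr
    _ ≤ x * #(S.sup A)ᶜ := by
      rw [← hS]; exact mul_le_mul_of_nonneg_left hchain hx₀

theorem exists_forall_notMem_of_card_le_mul_one_sub_pow
    (hA : ∀ a, DependsOn (· ∈ A a) (vbl a : Set ι)) {x : ℝ} (hx₀ : 0 ≤ x) (hx₁ : x < 1)
    {D : ℕ}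
    (hA_card : ∀ a, (#(A a) : ℝ) ≤ x * (1 - x) ^ D * Fintype.card (∀ i, β i))
    (hdep : ∀ a, #{b | b ≠ a ∧ ¬Disjoint (vbl a) (vbl b)} ≤ D) :
    ∃ ω, ∀ a, ω ∉ A a := by
  have hchain := one_sub_pow_mul_card_compl_sup_le hx₁.le (W := ∅) (T := univ)
    fun U _ b _ hbU => card_inter_compl_sup_le hA hx₀ hx₁.le hA_card hdep (∅ ∪ U) (by simpa)
  have hpos : (0 : ℝ) < #((∅ ∪ univ).sup A)ᶜ := by
    refine lt_of_lt_of_le ?_ hchain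
    have : (0 : ℝ) < 1 - x := by linarith
    simp only [sup_empty, compl_bot, top_eq_univ, card_univ]
    exact mul_pos (pow_pos this _) (by exact_mod_cast Fintype.card_pos)
  obtain ⟨ω, hω⟩ := card_pos.mp (by exact_mod_cast hpos)
  simp only [empty_union, mem_compl, mem_sup, mem_univ, true_and, not_exists] at hω
  exact ⟨ω, hω⟩

theorem exists_forall_notMem_of_exp_mul_le
    (hA : ∀ a, DependsOn (· ∈ A a) (vbl a : Set ι)) {p : ℝ} {D : ℕ}
    (hA_card : ∀ a, (#(A a) : ℝ) ≤ p * Fintype.card (∀ i, β i))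
    (hdep : ∀ a, #{b | b ≠ a ∧ ¬Disjoint (vbl a) (vbl b)} ≤ D)
    (h : Real.exp 1 * p * (D + 1) ≤ 1) :
    ∃ ω, ∀ a, ω ∉ A a := by
  have he : 0 < Real.exp 1 := Real.exp_pos 1
  rcases D.eq_zero_or_pos with rfl | hD
  · refine exists_forall_notMem_of_card_le_mul_one_sub_pow hA (x := (Real.exp 1)⁻¹)
      (by positivity) (inv_lt_one_of_one_lt₀ (Real.one_lt_exp_iff.mpr one_pos)) (fun a => ?_) hdep
    refine (hA_card a).trans (mul_le_mul_of_nonneg_right ?_ (Nat.cast_nonneg _))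
    rw [pow_zero, mul_one, ← mul_one (Real.exp 1)⁻¹, le_inv_mul_iff₀ he]
    simpa using h
  · have hD' : (0 : ℝ) < D := by exact_mod_cast hD
    -- `1 - 1/(D+1) = 1/(1 + 1/D)` and `(1 + 1/D)^D ≤ e`
    have hpow : (Real.exp 1)⁻¹ ≤ (1 - (D + 1 : ℝ)⁻¹) ^ D := by
      rw [show 1 - (D + 1 : ℝ)⁻¹ = (1 + (D : ℝ)⁻¹)⁻¹ by field_simp; ring, inv_pow]
      exact inv_anti₀ (by positivity) Real.one_add_inv_pow_le_exp
    have hp : p ≤ (D + 1 : ℝ)⁻¹ * (1 - (D + 1 : ℝ)⁻¹) ^ D := by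
      refine le_trans ?_ (mul_le_mul_of_nonneg_left hpow (by positivity))
      rw [← mul_inv, ← mul_one (_ * _)⁻¹, le_inv_mul_iff₀ (by positivity)]
      linarith
    refine exists_forall_notMem_of_card_le_mul_one_sub_pow hA (x := (D + 1 : ℝ)⁻¹)
      (by positivity) (inv_lt_one_of_one_lt₀ (by linarith)) (fun a => ?_) hdep
    exact (hA_card a).trans (mul_le_mul_of_nonneg_right hp (Nat.cast_nonneg _))

end LocalLemma

namespace SimpleGraph

variable {V : Type*} {G : SimpleGraph V}

theorem IsAcyclic.eq_penultimate_of_adj_of_dist_lt (hG : G.IsAcyclic) {r v u : V}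
    {q : G.Walk r v} (hq : q.IsPath) (hadj : G.Adj v u) (hlt : G.dist r u < G.dist r v) :
    u = q.penultimate := by
  classical
  obtain ⟨p, hp, hpl⟩ := (q.reachable.trans hadj.reachable).exists_path_of_dist
  have hv : v ∉ p.support := fun hv => by
    have := dist_le (p.takeUntil v hv)
    have := p.length_takeUntil_le_length hv
    omega
  exact hG.eq_penultimate_of_adj_end hq hadj
    (hG.mem_support_of_ne_mem_support_of_adj_of_isPath hq hp hadj hv)

theorem IsAcyclic.eq_of_adj_of_dist_lt (hG : G.IsAcyclic) {r v u₁ u₂ : V} (hr : G.Reachable r v)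
    (h₁ : G.Adj v u₁) (h₁' : G.dist r u₁ < G.dist r v)
    (h₂ : G.Adj v u₂) (h₂' : G.dist r u₂ < G.dist r v) : u₁ = u₂ := by
  obtain ⟨q, hq, -⟩ := hr.exists_path_of_dist
  rw [hG.eq_penultimate_of_adj_of_dist_lt hq h₁ h₁',
    hG.eq_penultimate_of_adj_of_dist_lt hq h₂ h₂']

variable (G) in
noncomputable def root (v : V) : V := (G.connectedComponentMk v).out

theorem reachable_root (v : V) : G.Reachable (G.root v) v :=
  ConnectedComponent.exact (G.connectedComponentMk v).out_eq

theorem root_eq_of_adj {u v : V} (h : G.Adj u v) : G.root u = G.root v := by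
  rw [root, root, ConnectedComponent.connectedComponentMk_eq_of_adj h]

variable (G) in
open scoped Classical in
noncomputable def parent (v : V) : Option V :=
  if h : ∃ u, G.Adj v u ∧ G.dist (G.root v) u < G.dist (G.root v) v then some h.choose else none

theorem parent_spec {u v : V} (h : G.parent v = some u) :
    G.Adj v u ∧ G.dist (G.root v) u < G.dist (G.root v) v := by
  unfold parent at h
  split_ifs at h with hex
  exact Option.some_injective _ h ▸ hex.choose_spec

theorem adj_of_parent_eq_some {u v : V} (h : G.parent v = some u) : G.Adj v u :=
  (parent_spec h).1

theorem parent_ne_some_of_parent_eq_some {u v : V} (h : G.parent u = some v) :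
    G.parent v ≠ some u := fun h' => by
  have hu := parent_spec h
  have hv := parent_spec h'
  rw [root_eq_of_adj hu.1] at hu
  omega

theorem IsAcyclic.parent_eq_some_of_dist_lt (hG : G.IsAcyclic) {u v : V} (hadj : G.Adj v u)
    (hlt : G.dist (G.root v) u < G.dist (G.root v) v) : G.parent v = some u := by
  have hex : ∃ u, G.Adj v u ∧ G.dist (G.root v) u < G.dist (G.root v) v := ⟨u, hadj, hlt⟩
  rw [parent, dif_pos hex, hG.eq_of_adj_of_dist_lt (reachable_root v) hex.choose_spec.1
    hex.choose_spec.2 hadj hlt]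

theorem IsAcyclic.parent_eq_some_or (hG : G.IsAcyclic) {u v : V} (hadj : G.Adj u v) :
    G.parent u = some v ∨ G.parent v = some u := by
  rcases hG.dist_eq_dist_add_one_of_adj_of_reachable _ hadj (reachable_root u) with h | h
  · exact .inl (hG.parent_eq_some_of_dist_lt hadj (by omega))
  · refine .inr (hG.parent_eq_some_of_dist_lt hadj.symm ?_)
    rw [← root_eq_of_adj hadj]
    omega

section Counting

open scoped Classical

variable (G) in
noncomputable def withParent (v : V) : Finset V := insert v (G.parent v).toFinset

theorem self_mem_withParent (v : V) : v ∈ G.withParent v := mem_insert_self v _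

theorem mem_withParent_of_parent_eq_some {u v : V} (h : G.parent v = some u) :
    u ∈ G.withParent v := by
  simp [withParent, h]

variable [Fintype V]

variable (G) in
noncomputable def children (v : V) : Finset V := {u | G.parent u = some v}

theorem card_children_add_card_parent_le (v : V) :
    #(G.children v) + #(G.parent v).toFinset ≤ (G.neighborSet v).ncard := by
  have hdisj : Disjoint (G.children v) (G.parent v).toFinset := by
    refine Finset.disjoint_left.mpr fun u hu hp => ?_
    simp only [children, mem_filter, mem_univ, true_and] at hu
    exact parent_ne_some_of_parent_eq_some hu (Option.mem_toFinset.mp hp)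
  have hsub :
      ((G.children v ∪ (G.parent v).toFinset : Finset V) : Set V) ⊆ G.neighborSet v := by
    intro u hu
    simp only [coe_union, Set.mem_union, mem_coe, children, mem_filter, mem_univ, true_and,
      Option.mem_toFinset, Option.mem_def] at hu
    rcases hu with hu | hu
    · exact (adj_of_parent_eq_some hu).symm
    · exact adj_of_parent_eq_some hu
  rw [← card_union_of_disjoint hdisj, ← Set.ncard_coe_finset]
  exact Set.ncard_le_ncard hsub

theorem card_filter_not_disjoint_withParent_le {d : ℕ}
    (hd : ∀ v, (G.neighborSet v).ncard ≤ d) (v : V) :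
    #{u | u ≠ v ∧ ¬Disjoint (G.withParent v) (G.withParent u)} ≤ 2 * d - 1 := by
  have hmem : ∀ u ∈ ({u | u ≠ v ∧ ¬Disjoint (G.withParent v) (G.withParent u)} : Finset V),
      G.parent v = some u ∨ u ∈ G.children v ∨
        ∃ w, G.parent v = some w ∧ u ∈ G.children w := by
    intro u hu
    simp only [mem_filter, mem_univ, true_and, withParent, not_disjoint_iff, mem_insert,
      Option.mem_toFinset, Option.mem_def, children] at hu ⊢
    obtain ⟨hne, x, hxv, hxu⟩ := hu
    rcases hxv with rfl | hxv <;> rcases hxu with rfl | hxu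
    · exact absurd rfl hne
    · exact .inr (.inl hxu)
    · exact .inl hxv
    · exact .inr (.inr ⟨x, hxv, hxu⟩)
  have hv := card_children_add_card_parent_le (G := G) v
  have := hd v
  cases hp : G.parent v with
  | none =>
    have hsub : ({u | u ≠ v ∧ ¬Disjoint (G.withParent v) (G.withParent u)} : Finset V) ⊆
        G.children v := fun u hu => by
      simpa [hp] using hmem u hu
    have := card_le_card hsub
    omega
  | some w =>
    have hsub : ({u | u ≠ v ∧ ¬Disjoint (G.withParent v) (G.withParent u)} : Finset V) ⊆
        insert w (G.children v ∪ (G.children w).erase v) := fun u hu => by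
      have hne : u ≠ v := (mem_filter.mp hu).2.1
      simpa [hp, hne, eq_comm] using hmem u hu
    have hvw : v ∈ G.children w := by simp [children, hp]
    have hw := card_children_add_card_parent_le (G := G) w
    have := hd w
    have := card_le_card hsub
    have := card_insert_le w (G.children v ∪ (G.children w).erase v)
    have := card_union_le (G.children v) ((G.children w).erase v)
    rw [card_erase_of_mem hvw] at *
    simp only [hp, Option.toFinset_some, card_singleton] at hv
    omega

end Counting

end SimpleGraph

section CooperativeColoring

open scoped Classical

open SimpleGraph

variable {V : Type*} {m : ℕ} {F : Fin m → SimpleGraph V}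

-- `ω (u, i)` is the coin of `u` in the forest `F i`: `v` takes the colour `i` when its own coin
-- is `true` and the coin of its parent is `false`.
variable (F) in
def Covers (i : Fin m) (v : V) (ω : V × Fin m → Bool) : Prop :=
  ∀ u ∈ (F i).withParent v, ω (u, i) = decide (u = v)

theorem not_covers_of_parent_eq_some {i : Fin m} {u v : V} {ω : V × Fin m → Bool}
    (h : (F i).parent u = some v) (hu : Covers F i u ω) : ¬Covers F i v ω := fun hv => by
  have h₁ := hu v (mem_withParent_of_parent_eq_some h)
  rw [hv v (self_mem_withParent v), decide_eq_decide] at h₁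
  exact (F i).ne_of_adj (adj_of_parent_eq_some h) (h₁.mp rfl).symm

theorem indepIn_setOf_covers {i : Fin m} (hF : (F i).IsAcyclic) (ω : V × Fin m → Bool) :
    IndepIn (F i) {v | Covers F i v ω} := fun _ hu _ hv huv =>
  (hF.parent_eq_some_or huv).elim (fun h => not_covers_of_parent_eq_some h hu hv)
    (fun h => not_covers_of_parent_eq_some h hv hu)

variable [Fintype V]

variable (F) in
noncomputable def uncovered (v : V) : Finset (V × Fin m → Bool) :=
  univ.inf fun i => ({ω | ¬Covers F i v ω} : Finset _)

theorem mem_uncovered {v : V} {ω : V × Fin m → Bool} :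
    ω ∈ uncovered F v ↔ ∀ i, ¬Covers F i v ω := by
  simp only [uncovered, mem_inf, mem_univ, forall_const, mem_filter_univ]

variable (F) in
noncomputable def coverVars (v : V) : Finset (V × Fin m) :=
  {c | c.1 ∈ (F c.2).withParent v}

theorem card_le_four_mul_card_covers (i : Fin m) (v : V) :
    Fintype.card (V × Fin m → Bool) ≤ 4 * #{ω | Covers F i v ω} := by
  have hT : #((F i).withParent v ×ˢ {i}) ≤ 2 := by
    rw [card_product, card_singleton, mul_one]
    exact (card_insert_le _ _).trans (by cases (F i).parent v <;> simp)
  have h := card_filter_forall_eq_mul_pow ((F i).withParent v ×ˢ {i})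
    fun c : V × Fin m => decide (c.1 = v)
  have heq : ({ω | Covers F i v ω} : Finset (V × Fin m → Bool)) =
      ({ω | ∀ c ∈ (F i).withParent v ×ˢ {i}, ω c = decide (c.1 = v)} : Finset _) := by
    ext ω
    rw [mem_filter_univ, mem_filter_univ]
    simp [Covers]
  rw [Fintype.card_bool, ← Fintype.card_bool, ← Fintype.card_fun] at h
  rw [heq, ← h, mul_comm 4]
  exact Nat.mul_le_mul_left _ ((Nat.pow_le_pow_right (by simp) hT).trans (by simp))

theorem dependsOn_mem_filter_not_covers (i : Fin m) (v : V) :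
    DependsOn (· ∈ ({ω | ¬Covers F i v ω} : Finset (V × Fin m → Bool)))
      (↑((F i).withParent v ×ˢ {i}) : Set (V × Fin m)) := by
  intro ω η h
  simp only [mem_filter_univ]
  refine propext (not_congr (forall₂_congr fun u hu => ?_))
  rw [h (u, i) (by simp [hu])]

theorem card_uncovered_le (v : V) :
    (#(uncovered F v) : ℝ) ≤ (3 / 4) ^ m * Fintype.card (V × Fin m → Bool) := by
  have hT : ((univ : Finset (Fin m)) : Set (Fin m)).PairwiseDisjoint
      fun i => (F i).withParent v ×ˢ {i} := by
    intro i _ j _ hij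
    simp only [Function.onFun]
    exact disjoint_product.mpr (.inr (disjoint_singleton.mpr hij))
  have hq : ∀ i ∈ univ, (#({ω | ¬Covers F i v ω} : Finset (V × Fin m → Bool)) : ℝ) ≤
      3 / 4 * Fintype.card (V × Fin m → Bool) := fun i _ => by
    have h := card_filter_add_card_filter_not (s := univ) (Covers F i v)
    have h4 : (Fintype.card (V × Fin m → Bool) : ℝ) ≤ 4 * #{ω | Covers F i v ω} := by
      exact_mod_cast card_le_four_mul_card_covers i v
    rw [card_univ] at h
    rw [← h] at h4 ⊢
    push_cast at h4 ⊢
    linarith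
  simpa [uncovered] using card_inf_le_pow_mul (dependsOn_mem_filter_not_covers · v) hT hq

theorem dependsOn_mem_uncovered (v : V) :
    DependsOn (· ∈ uncovered F v) (coverVars F v : Set (V × Fin m)) := by
  intro ω η h
  simp only [uncovered, mem_inf, mem_univ, forall_const]
  refine propext (forall_congr' fun i => ((dependsOn_mem_filter_not_covers i v).mono ?_ h).to_iff)
  intro c hc
  simp only [coe_product, coe_singleton, Set.mem_prod, mem_coe, Set.mem_singleton_iff] at hc
  simp [coverVars, hc.2, hc.1]

theorem card_filter_not_disjoint_coverVars_le {d : ℕ}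
    (hd : ∀ i v, ((F i).neighborSet v).ncard ≤ d) (v : V) :
    #{u | u ≠ v ∧ ¬Disjoint (coverVars F v) (coverVars F u)} ≤ m * (2 * d - 1) := by
  calc _ ≤ #(univ.biUnion fun i =>
          ({u | u ≠ v ∧ ¬Disjoint ((F i).withParent v) ((F i).withParent u)} : Finset V)) := by
        refine card_le_card fun u hu => ?_
        simp only [mem_filter_univ, mem_biUnion, mem_univ, true_and, coverVars,
          not_disjoint_iff] at hu ⊢
        obtain ⟨hne, c, hcv, hcu⟩ := hu
        exact ⟨c.2, hne, c.1, hcv, hcu⟩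
    _ ≤ ∑ i,
        #({u | u ≠ v ∧ ¬Disjoint ((F i).withParent v) ((F i).withParent u)} : Finset V) :=
        card_biUnion_le
    _ ≤ ∑ _i : Fin m, (2 * d - 1) :=
        sum_le_sum fun i _ => card_filter_not_disjoint_withParent_le (hd i) v
    _ = m * (2 * d - 1) := by simp

end CooperativeColoring

/-- If `e · 2md · (3/4)^m ≤ 1`, then every `m` forests of maximum degree at
most `d` on a common finite vertex set have a cooperative coloring. -/
theorem coop_coloring_of_forests_lll (m d : ℕ) (hm : 1 ≤ m) (hd : 1 ≤ d)
    (h : Real.exp 1 * (2 * m * d) * (3 / 4 : ℝ) ^ m ≤ 1)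
    (V : Type*) [Fintype V] (F : Fin m → SimpleGraph V)
    (hacyc : ∀ i, (F i).IsAcyclic) (hdeg : ∀ i, maxDeg (F i) ≤ d) :
    HasCoopColoring F := by
  classical
  have hdeg' : ∀ i v, ((F i).neighborSet v).ncard ≤ d := fun i v =>
    Finset.sup_le_iff.mp (hdeg i) v (mem_univ v)
  have hD : m * (2 * d - 1) + 1 ≤ 2 * m * d := by
    obtain ⟨k, rfl⟩ : ∃ k, d = k + 1 := ⟨d - 1, by omega⟩
    rw [show 2 * (k + 1) - 1 = 2 * k + 1 by omega]
    nlinarith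
  have hD' : ((m * (2 * d - 1) : ℕ) : ℝ) + 1 ≤ 2 * m * d := by exact_mod_cast hD
  have hexp : Real.exp 1 * (3 / 4) ^ m * ((m * (2 * d - 1) : ℕ) + 1) ≤ 1 :=
    calc _ ≤ Real.exp 1 * (3 / 4) ^ m * (2 * m * d) := by gcongr
      _ = Real.exp 1 * (2 * m * d) * (3 / 4) ^ m := by ring
      _ ≤ 1 := h
  obtain ⟨ω, hω⟩ := exists_forall_notMem_of_exp_mul_le (dependsOn_mem_uncovered (F := F))
    (card_uncovered_le (F := F)) (card_filter_not_disjoint_coverVars_le hdeg') hexp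
  refine ⟨fun i => {v | Covers F i v ω}, fun i => indepIn_setOf_covers (hacyc i) ω, ?_⟩
  ext v
  simpa [mem_uncovered] using hω v
end

section
/- For every integer m ≥ 1, consider the vertex set V = {0,1}^m, and for each j ∈ {1,…,m} let G_j be the complete bipartite graph on V joining every u with u_j = 0 to every v with v_j = 1 (i.e., u and v are adjacent in G_j if and only if u_j ≠ v_j). Each G_j is bipartite of maximum degree 2^(m-1), and the system (G_1, …, G_m) has no cooperative coloring. -/
/-- A graph is bipartite: its vertex set can be split into two sides such that
every edge goes between the sides (equivalently, the two sides are independent). -/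
def IsBipart {V : Type*} (G : SimpleGraph V) : Prop :=
  ∃ A : Set V, ∀ ⦃u v⦄, G.Adj u v → (u ∈ A ↔ v ∉ A)

/-- `coordGraph m j`: the complete bipartite graph on `{0,1}^m` joining every
vertex whose `j`-th coordinate is `0` to every vertex whose `j`-th coordinate
is `1`. -/
def coordGraph (m : ℕ) (j : Fin m) : SimpleGraph (Fin m → Bool) where
  Adj u v := u j ≠ v j
  symm := ⟨fun _ _ h => Ne.symm h⟩
  loopless := ⟨fun _ h => h rfl⟩

theorem IsBipart.of_coloring {V : Type*} {G : SimpleGraph V} (C : G.Coloring Bool) :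
    IsBipart G :=
  ⟨{v | C v}, fun u v huv => by
    have hne := C.valid huv
    revert hne
    simp only [Set.mem_ofPred_eq]
    cases C u <;> cases C v <;> simp⟩

theorem maxDeg_eq_of_forall_ncard_neighborSet_eq {V : Type*} [Fintype V] [Nonempty V]
    {G : SimpleGraph V} {d : ℕ} (h : ∀ v, (G.neighborSet v).ncard = d) : maxDeg G = d := by
  simp only [maxDeg, h]
  exact Finset.sup_const Finset.univ_nonempty d

theorem card_filter_apply_eq {ι κ : Type*} [Fintype ι] [DecidableEq ι] [Fintype κ]
    [DecidableEq κ] (i : ι) (x : κ) :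
    (Finset.univ.filter fun f : ι → κ => f i = x).card =
      Fintype.card κ ^ (Fintype.card ι - 1) := by
  simpa using Fintype.card_filter_piFinset_const_eq_of_mem Finset.univ i (Finset.mem_univ x)

def coordGraphColoring (m : ℕ) (j : Fin m) : (coordGraph m j).Coloring Bool :=
  SimpleGraph.Coloring.mk (fun u => u j) fun huv => huv

theorem ncard_neighborSet_coordGraph (m : ℕ) (j : Fin m) (v : Fin m → Bool) :
    ((coordGraph m j).neighborSet v).ncard = 2 ^ (m - 1) := by
  have hnbr : (coordGraph m j).neighborSet v = {u | u j = !v j} := by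
    ext u
    change v j ≠ u j ↔ u j = !v j
    cases v j <;> cases u j <;> simp
  rw [hnbr, Set.ncard_eq_toFinset_card', Set.toFinset_ofPred, card_filter_apply_eq]
  simp

theorem IndepIn.exists_forall_coord_eq {m : ℕ} {j : Fin m} {I : Set (Fin m → Bool)}
    (hI : IndepIn (coordGraph m j) I) : ∃ b, ∀ u ∈ I, u j = b := by
  rcases I.eq_empty_or_nonempty with rfl | ⟨u₀, hu₀⟩
  · exact ⟨true, by simp⟩
  · exact ⟨u₀ j, fun u hu => of_not_not (hI hu hu₀)⟩

-- Each `I j` has constant `j`-th coordinate `b j`, so the vertex `fun j => !b j` lies in no `I j`.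
theorem not_hasCoopColoring_coordGraph (m : ℕ) : ¬ HasCoopColoring (coordGraph m) := by
  rintro ⟨I, hindep, hcover⟩
  choose b hb using fun j => (hindep j).exists_forall_coord_eq
  have hw : (fun j => !b j) ∈ ⋃ j, I j := hcover ▸ Set.mem_univ _
  obtain ⟨j, hj⟩ := Set.mem_iUnion.mp hw
  simpa using hb j _ hj

theorem coordGraphs_no_coop_coloring_general (m : ℕ) :
    (∀ j, IsBipart (coordGraph m j)) ∧
    (∀ j, maxDeg (coordGraph m j) = 2 ^ (m - 1)) ∧
    ¬ HasCoopColoring (coordGraph m) :=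
  ⟨fun j => .of_coloring (coordGraphColoring m j),
    fun j => maxDeg_eq_of_forall_ncard_neighborSet_eq (ncard_neighborSet_coordGraph m j),
    not_hasCoopColoring_coordGraph m⟩

/-- Each `coordGraph m j` is bipartite of maximum degree `2 ^ (m - 1)`, and the
system `(coordGraph m j)_{j}` has no cooperative coloring. -/
theorem coordGraphs_no_coop_coloring (m : ℕ) (hm : 1 ≤ m) :
    (∀ j, IsBipart (coordGraph m j)) ∧
    (∀ j, maxDeg (coordGraph m j) = 2 ^ (m - 1)) ∧
    ¬ HasCoopColoring (coordGraph m) :=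
  coordGraphs_no_coop_coloring_general m
end

section
/- For every integer d ≥ 2, there exists a finite vertex set V and a system of ⌈log₂ d⌉ bipartite simple graphs on V, each of maximum degree at most d, that has no cooperative coloring; consequently m_B(d) > log₂ d, where B is the class of bipartite graphs. -/
/-- Every system of `m` bipartite graphs of maximum degree at most `d` on a
common finite vertex set has a cooperative coloring. -/
def BipartiteColorable (d m : ℕ) : Prop :=
  ∀ (V : Type) [Fintype V] (G : Fin m → SimpleGraph V),
    (∀ i, IsBipart (G i)) → (∀ i, maxDeg (G i) ≤ d) → HasCoopColoring G

/-- `m_B(d)`: the least `m` such that every `m` bipartite graphs of maximum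
degree at most `d` on a common finite vertex set have a cooperative coloring. -/
noncomputable def mB (d : ℕ) : ℕ := sInf {m | BipartiteColorable d m}

/-!
On the `2 ^ k` binary words of length `k`, let the `i`-th graph join two words whose `i`-th digits
differ. It is bipartite and `2 ^ (k - 1)`-regular, and each of its independent sets fixes the
`i`-th digit, so the word disagreeing in digit `i` with the `i`-th colour class, for every `i`, is
never covered. With `k = ⌈log₂ d⌉` all degrees are at most `d`.

Since `sInf ∅ = 0`, the bound on `m_B(d)` also needs some number of graphs that always suffices.
`16 d` graphs do, by a counting form of the symmetric local lemma: for a uniformly random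
colouring `V → Fin m`, "`u, v` are adjacent in `G j` and both coloured `j`" is an event of
probability `1 / m ^ 2` sharing a vertex with at most `4 m d` other such events.
-/

open Finset

section Reassign

variable {V α : Type*} [DecidableEq V] {u w : V}

def reassign (u w : V) (f : V → α) (a b : α) : V → α :=
  Function.update (Function.update f u a) w b

theorem reassign_apply_left (huw : u ≠ w) (f : V → α) (a b : α) :
    reassign u w f a b u = a := by
  simp [reassign, huw]

theorem reassign_apply_right (f : V → α) (a b : α) : reassign u w f a b w = b := by
  simp [reassign]

theorem reassign_reassign (huw : u ≠ w) (f : V → α) (a b a' b' : α) :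
    reassign u w (reassign u w f a b) a' b' = reassign u w f a' b' := by
  simp only [reassign, Function.update_comm huw.symm (β := fun _ => α) b a',
    Function.update_idem]

theorem reassign_self (f : V → α) : reassign u w f (f u) (f w) = f := by
  simp [reassign]

end Reassign

section ForbiddenPairs

open scoped Classical

variable {V α : Type*} {B S T : Finset ((V × α) × (V × α))} {D : ℕ}

def Realizes (f : V → α) (c : (V × α) × (V × α)) : Prop :=
  f c.1.1 = c.1.2 ∧ f c.2.1 = c.2.2

def Touches (c : (V × α) × (V × α)) (v : V) : Prop :=
  c.1.1 = v ∨ c.2.1 = v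

theorem card_filter_touches_le (hSB : S ⊆ B) (hdeg : ∀ v, #{c ∈ B | Touches c v} ≤ D)
    (u w : V) : #{s ∈ S | Touches s u ∨ Touches s w} ≤ 2 * D := by
  rw [filter_or, two_mul]
  refine (card_union_le _ _).trans (add_le_add ?_ ?_)
  · exact (card_le_card (filter_subset_filter _ hSB)).trans (hdeg u)
  · exact (card_le_card (filter_subset_filter _ hSB)).trans (hdeg w)

variable [Fintype V] [Fintype α]

noncomputable def avoiders (S : Finset ((V × α) × (V × α))) : Finset (V → α) :=
  {f | ∀ c ∈ S, ¬ Realizes f c}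

theorem mem_avoiders {f : V → α} : f ∈ avoiders S ↔ ∀ c ∈ S, ¬ Realizes f c := by
  simp [avoiders]

theorem avoiders_anti (h : S ⊆ T) : avoiders T ⊆ avoiders S := fun _ hf =>
  mem_avoiders.2 fun c hc => mem_avoiders.1 hf c (h hc)

theorem card_avoiders_le_add_sum :
    #(avoiders S) ≤ #(avoiders T) + ∑ c ∈ T \ S, #{f ∈ avoiders S | Realizes f c} := by
  have hcover : avoiders S ⊆
      avoiders T ∪ (T \ S).biUnion fun c => {f ∈ avoiders S | Realizes f c} := by
    intro f hf
    by_cases hfT : f ∈ avoiders T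
    · exact mem_union_left _ hfT
    obtain ⟨c, hcT, hfc⟩ : ∃ c ∈ T, Realizes f c := by simpa [mem_avoiders] using hfT
    have hcS : c ∉ S := fun hcS => mem_avoiders.1 hf c hcS hfc
    exact mem_union_right _
      (mem_biUnion.2 ⟨c, mem_sdiff.2 ⟨hcT, hcS⟩, mem_filter.2 ⟨hf, hfc⟩⟩)
  calc #(avoiders S) ≤ _ := card_le_card hcover
    _ ≤ _ := card_union_le _ _
    _ ≤ _ := by gcongr; exact card_biUnion_le

theorem reassign_mem_avoiders {u w : V} (hS : ∀ s ∈ S, ¬ Touches s u ∧ ¬ Touches s w)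
    {f : V → α} (hf : f ∈ avoiders S) (a b : α) : reassign u w f a b ∈ avoiders S := by
  refine mem_avoiders.2 fun s hs => ?_
  obtain ⟨hsu, hsw⟩ := hS s hs
  simp only [Touches, not_or] at hsu hsw
  simpa only [Realizes, reassign, Function.update_of_ne hsu.1, Function.update_of_ne hsu.2,
    Function.update_of_ne hsw.1, Function.update_of_ne hsw.2] using mem_avoiders.1 hf s hs

/-- The values at the two points of `c` can be changed freely within the avoiders of `S`. -/
theorem card_avoiders_eq_card_sq_mul (c : (V × α) × (V × α)) (hc : c.1.1 ≠ c.2.1)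
    (hS : ∀ s ∈ S, ¬ Touches s c.1.1 ∧ ¬ Touches s c.2.1) :
    #(avoiders S) = Fintype.card α ^ 2 * #{f ∈ avoiders S | Realizes f c} := by
  obtain ⟨⟨u, a⟩, ⟨w, b⟩⟩ := c
  dsimp only at hc hS
  have hbij : #(avoiders S) = #({f ∈ avoiders S | Realizes f ((u, a), (w, b))} ×ˢ
      (univ : Finset (α × α))) := by
    refine card_bij' (fun f _ => (reassign u w f a b, (f u, f w)))
      (fun p _ => reassign u w p.1 p.2.1 p.2.2) ?_ ?_ ?_ ?_
    · intro f hf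
      rw [mem_product, mem_filter]
      exact ⟨⟨reassign_mem_avoiders hS hf a b, reassign_apply_left hc _ _ _,
        reassign_apply_right _ _ _⟩, mem_univ _⟩
    · intro p hp
      exact reassign_mem_avoiders hS (mem_filter.1 (mem_product.1 hp).1).1 _ _
    · intro f _
      simp only [reassign_reassign hc, reassign_self]
    · rintro ⟨g, a', b'⟩ hp
      obtain ⟨hgu, hgw⟩ : g u = a ∧ g w = b := (mem_filter.1 (mem_product.1 hp).1).2
      simp only [reassign_reassign hc, reassign_apply_left hc, reassign_apply_right,
        ← hgu, ← hgw, reassign_self]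
  rw [hbij, card_product, card_univ, Fintype.card_prod, sq, mul_comm]

theorem card_avoiders_le_two_mul (hα : 0 < Fintype.card α)
    (hS : ∀ c ∈ T \ S,
      Fintype.card α ^ 2 * #{f ∈ avoiders S | Realizes f c} ≤ 2 * #(avoiders S))
    (hcard : 4 * #(T \ S) ≤ Fintype.card α ^ 2) :
    #(avoiders S) ≤ 2 * #(avoiders T) := by
  set K := Fintype.card α ^ 2
  have hK : 0 < K := by positivity
  have hunion : K * #(avoiders S) ≤ K * #(avoiders T) + #(T \ S) * (2 * #(avoiders S)) :=
    calc K * #(avoiders S)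
        ≤ K * (#(avoiders T) + ∑ c ∈ T \ S, #{f ∈ avoiders S | Realizes f c}) := by
          gcongr; exact card_avoiders_le_add_sum
      _ = K * #(avoiders T) + ∑ c ∈ T \ S, K * #{f ∈ avoiders S | Realizes f c} := by
          rw [mul_add, mul_sum]
      _ ≤ K * #(avoiders T) + ∑ _c ∈ T \ S, 2 * #(avoiders S) :=
          add_le_add_right (sum_le_sum hS) _
      _ = K * #(avoiders T) + #(T \ S) * (2 * #(avoiders S)) := by rw [sum_const, smul_eq_mul]
  refine le_of_mul_le_mul_left (a := K) ?_ hK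
  nlinarith

/-- The counting form of the symmetric local lemma. -/
theorem card_sq_mul_card_realizes_le (hB : ∀ c ∈ B, c.1.1 ≠ c.2.1)
    (hdeg : ∀ v, #{c ∈ B | Touches c v} ≤ D) (hD : 8 * D ≤ Fintype.card α ^ 2)
    (hSB : S ⊆ B) {c : (V × α) × (V × α)} (hc : c ∈ B) :
    Fintype.card α ^ 2 * #{f ∈ avoiders S | Realizes f c} ≤ 2 * #(avoiders S) := by
  rcases (Fintype.card α).eq_zero_or_pos with hα | hα
  · simp [hα]
  induction S using Finset.strongInduction generalizing c with
  | H S ih =>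
    set touching := {s ∈ S | Touches s c.1.1 ∨ Touches s c.2.1}
    have hS' : S \ touching ⊆ S := sdiff_subset
    have hfree : ∀ s ∈ S \ touching, ¬ Touches s c.1.1 ∧ ¬ Touches s c.2.1 := by
      intro s hs
      have hs' := mem_sdiff.1 hs
      simp only [touching, mem_filter, not_and, not_or] at hs'
      exact hs'.2 hs'.1
    have hrec : #(avoiders (S \ touching)) ≤ 2 * #(avoiders S) := by
      rcases hS'.eq_or_ssubset with heq | hlt
      · rw [heq]; omega
      refine card_avoiders_le_two_mul hα (fun s hs => ?_) ?_
      · exact ih _ hlt (hS'.trans hSB) (hSB (mem_sdiff.1 hs).1)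
      · rw [Finset.sdiff_sdiff_eq_self (filter_subset _ _)]
        have := card_filter_touches_le hSB hdeg c.1.1 c.2.1
        omega
    calc Fintype.card α ^ 2 * #{f ∈ avoiders S | Realizes f c}
        ≤ Fintype.card α ^ 2 * #{f ∈ avoiders (S \ touching) | Realizes f c} := by
          gcongr; exact avoiders_anti hS'
      _ = #(avoiders (S \ touching)) := (card_avoiders_eq_card_sq_mul c (hB c hc) hfree).symm
      _ ≤ 2 * #(avoiders S) := hrec

theorem exists_forall_not_realizes (hB : ∀ c ∈ B, c.1.1 ≠ c.2.1)
    (hdeg : ∀ v, #{c ∈ B | Touches c v} ≤ D) (hD : 8 * D ≤ Fintype.card α ^ 2)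
    (hα : 2 < Fintype.card α ^ 2) : ∃ f : V → α, ∀ c ∈ B, ¬ Realizes f c := by
  suffices ∀ S ⊆ B, 0 < #(avoiders S) by
    obtain ⟨f, hf⟩ := card_pos.1 (this B subset_rfl)
    exact ⟨f, mem_avoiders.1 hf⟩
  intro S
  induction S using Finset.induction_on with
  | empty =>
    intro _
    have : Nonempty α := Fintype.card_pos_iff.1 (Nat.pos_of_ne_zero fun h => by simp [h] at hα)
    exact card_pos.2 ⟨fun _ => Classical.arbitrary α, mem_avoiders.2 (by simp)⟩
  | insert t S ht ih =>
    intro hSB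
    have hpos := ih ((subset_insert t S).trans hSB)
    have hbad := card_sq_mul_card_realizes_le hB hdeg hD ((subset_insert t S).trans hSB)
      (hSB (mem_insert_self t S))
    have hunion := card_avoiders_le_add_sum (S := S) (T := insert t S)
    rw [insert_sdiff_cancel ht, sum_singleton] at hunion
    by_contra! h0
    nlinarith

end ForbiddenPairs

section CooperativeColoring

open scoped Classical

variable {V : Type*} [Fintype V] {m d : ℕ}

/-- A function `V → Fin m` avoids these pairs exactly when its fibres form a cooperative
coloring of `G`. -/
noncomputable def conflicts (G : Fin m → SimpleGraph V) : Finset ((V × Fin m) × (V × Fin m)) :=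
  {c | c.1.2 = c.2.2 ∧ (G c.1.2).Adj c.1.1 c.2.1}

theorem card_neighborFinset_le_maxDeg (G : SimpleGraph V) (v : V) :
    #(G.neighborFinset v) ≤ maxDeg G := by
  rw [SimpleGraph.neighborFinset, ← Set.ncard_eq_toFinset_card']
  exact le_sup (f := fun v => (G.neighborSet v).ncard) (mem_univ v)

theorem card_conflicts_touches_le {G : Fin m → SimpleGraph V} (hdeg : ∀ j, maxDeg (G j) ≤ d)
    (v : V) : #{c ∈ conflicts G | Touches c v} ≤ 2 * m * d := by
  have hsub : {c ∈ conflicts G | Touches c v} ⊆ univ.biUnion fun j =>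
      ((G j).neighborFinset v).image (fun u => ((v, j), (u, j))) ∪
      ((G j).neighborFinset v).image (fun u => ((u, j), (v, j))) := by
    rintro ⟨⟨u, j⟩, ⟨w, j'⟩⟩ hc
    obtain ⟨hc, hv⟩ := mem_filter.1 hc
    obtain ⟨rfl, hadj⟩ : j = j' ∧ (G j).Adj u w := by simpa [conflicts] using hc
    obtain rfl | rfl := hv
    · simp [hadj]
    · simp [hadj.symm]
  calc #{c ∈ conflicts G | Touches c v}
      ≤ ∑ j : Fin m, #(((G j).neighborFinset v).image (fun u => ((v, j), (u, j))) ∪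
          ((G j).neighborFinset v).image (fun u => ((u, j), (v, j)))) :=
        (card_le_card hsub).trans card_biUnion_le
    _ ≤ ∑ _j : Fin m, (d + d) := by
        refine sum_le_sum fun j _ => (card_union_le _ _).trans (add_le_add ?_ ?_) <;>
          exact card_image_le.trans ((card_neighborFinset_le_maxDeg _ v).trans (hdeg j))
    _ = 2 * m * d := by rw [sum_const, card_univ, Fintype.card_fin, smul_eq_mul]; ring

theorem hasCoopColoring_of_maxDeg_le (G : Fin m → SimpleGraph V)
    (hdeg : ∀ j, maxDeg (G j) ≤ d) (hm : 16 * d ≤ m) (hm2 : 2 ≤ m) : HasCoopColoring G := by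
  have hB : ∀ c ∈ conflicts G, c.1.1 ≠ c.2.1 := fun c hc => (mem_filter.1 hc).2.2.ne
  have hD : 8 * (2 * m * d) ≤ Fintype.card (Fin m) ^ 2 := by
    rw [Fintype.card_fin]; nlinarith
  have hα : 2 < Fintype.card (Fin m) ^ 2 := by
    rw [Fintype.card_fin]; nlinarith
  obtain ⟨f, hf⟩ := exists_forall_not_realizes hB (card_conflicts_touches_le hdeg) hD hα
  refine ⟨fun j => f ⁻¹' {j}, fun j u hu w hw huw => ?_,
    Set.eq_univ_of_forall fun v => Set.mem_iUnion.2 ⟨f v, rfl⟩⟩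
  exact hf ((u, j), (w, j)) (by simp [conflicts, huw]) ⟨hu, hw⟩

theorem bipartiteColorable_of_le (hm : 16 * d ≤ m) (hm2 : 2 ≤ m) : BipartiteColorable d m :=
  fun _ _ G _ hdeg => hasCoopColoring_of_maxDeg_le G hdeg hm hm2

end CooperativeColoring

section DigitGraphs

def digits (m : ℕ) : Fin (2 ^ m) ≃ (Fin m → Fin 2) :=
  finFunctionFinEquiv.symm

def digitGraph (m : ℕ) (i : Fin m) : SimpleGraph (Fin (2 ^ m)) where
  Adj u v := digits m u i ≠ digits m v i
  symm := ⟨fun _ _ h => Ne.symm h⟩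
  loopless := ⟨fun _ h => h rfl⟩

variable {m d : ℕ}

theorem digitGraph_adj {i : Fin m} {u v : Fin (2 ^ m)} :
    (digitGraph m i).Adj u v ↔ digits m u i ≠ digits m v i :=
  Iff.rfl

theorem isBipart_digitGraph (i : Fin m) : IsBipart (digitGraph m i) :=
  ⟨{v | digits m v i = 0}, fun u v h =>
    show digits m u i = 0 ↔ digits m v i ≠ 0 by rw [digitGraph_adj] at h; omega⟩

theorem maxDeg_digitGraph_le (i : Fin m) : maxDeg (digitGraph m i) ≤ 2 ^ (m - 1) := by
  refine Finset.sup_le fun v _ => ?_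
  have hinj : Set.InjOn (fun u (j : {j // j ≠ i}) => digits m u j)
      ((digitGraph m i).neighborSet v) := by
    intro u₁ hu₁ u₂ hu₂ h
    rw [SimpleGraph.mem_neighborSet, digitGraph_adj] at hu₁ hu₂
    refine (digits m).injective (funext fun j => ?_)
    rcases eq_or_ne j i with rfl | hj
    · omega
    · exact congrFun h ⟨j, hj⟩
  calc ((digitGraph m i).neighborSet v).ncard
      ≤ (Set.univ : Set ({j // j ≠ i} → Fin 2)).ncard :=
        Set.ncard_le_ncard_of_injOn _ (fun _ _ => Set.mem_univ _) hinj Set.finite_univ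
    _ = 2 ^ (m - 1) := by
        simp [Set.ncard_univ, Fintype.card_subtype_compl]

theorem exists_digits_eq_of_indepIn {i : Fin m} {I : Set (Fin (2 ^ m))}
    (hI : IndepIn (digitGraph m i) I) : ∃ c, ∀ u ∈ I, digits m u i = c := by
  rcases I.eq_empty_or_nonempty with rfl | ⟨u₀, hu₀⟩
  · exact ⟨0, by simp⟩
  · exact ⟨digits m u₀ i, fun u hu => not_not.1 (digitGraph_adj.not.1 (hI hu hu₀))⟩

theorem not_hasCoopColoring_digitGraph (m : ℕ) : ¬ HasCoopColoring (digitGraph m) := by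
  rintro ⟨I, hI, hcover⟩
  choose c hc using fun i => exists_digits_eq_of_indepIn (hI i)
  obtain ⟨i, hi⟩ := Set.mem_iUnion.1 (hcover ▸ Set.mem_univ ((digits m).symm (c + 1)))
  exact absurd (hc i _ hi) (by simp)

theorem not_bipartiteColorable (hd : 2 ^ (m - 1) ≤ d) : ¬ BipartiteColorable d m := fun h =>
  not_hasCoopColoring_digitGraph m <| h _ (digitGraph m) isBipart_digitGraph
    fun i => (maxDeg_digitGraph_le i).trans hd

end DigitGraphs

/-- For every `d ≥ 2` there are `⌈log₂ d⌉` bipartite graphs on a common finite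
vertex set, each of maximum degree at most `d`, with no cooperative coloring;
consequently `m_B(d) > log₂ d`. -/
theorem bipartite_lower_bound (d : ℕ) (hd : 2 ≤ d) :
    (∃ (n : ℕ) (G : Fin ⌈Real.logb 2 d⌉₊ → SimpleGraph (Fin n)),
      (∀ i, IsBipart (G i)) ∧ (∀ i, maxDeg (G i) ≤ d) ∧ ¬ HasCoopColoring G) ∧
    Real.logb 2 d < (mB d : ℝ) := by
  have hk : ⌈Real.logb 2 d⌉₊ = Nat.clog 2 d := by
    rw [show (2 : ℝ) = ((2 : ℕ) : ℝ) by norm_num, ← Int.ceil_toNat,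
      Real.ceil_logb_natCast (Nat.cast_nonneg d), Int.clog_natCast, Int.toNat_natCast]
  set k := ⌈Real.logb 2 d⌉₊
  have hpow : 2 ^ (k - 1) ≤ d := hk ▸ (Nat.pow_pred_clog_lt_self one_lt_two hd).le
  refine ⟨⟨2 ^ k, digitGraph k, isBipart_digitGraph,
    fun i => (maxDeg_digitGraph_le i).trans hpow, not_hasCoopColoring_digitGraph k⟩, ?_⟩
  have hmB : BipartiteColorable d (mB d) :=
    Nat.sInf_mem (s := {m | BipartiteColorable d m})
      ⟨16 * d, bipartiteColorable_of_le le_rfl (by omega)⟩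
  have hkmB : k < mB d := not_le.1 fun h =>
    not_bipartiteColorable ((Nat.pow_le_pow_right two_pos (by omega)).trans hpow) hmB
  calc Real.logb 2 d ≤ k := Nat.le_ceil _
    _ < mB d := by exact_mod_cast hkmB
end

section
/- Let A be a finite set, m ≥ 1 an integer, and for each a ∈ A let J(a) be a nonempty subset of {1,…,m}. Let (j(a))_{a∈A} be independent random variables, with j(a) uniformly distributed on J(a). For each j ∈ {1,…,m}, fix a subset N_j ⊆ A and let E^j be the event that j(a) = j for some a ∈ N_j. Then the events E^1, …, E^m are negatively correlated: for every subset S ⊆ {1,…,m}, P(⋂_{j∈S} E^j) ≤ ∏_{j∈S} P(E^j). -/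
/-!
Induct on a finite set `B` containing every `N j`, and condition on the value `x` of one
coordinate `j(a)`, `a ∈ B`. Let `q j` be the probability of `E^j` after deleting `a` from all
the `N j`; these events ignore `j(a)`. On the slice `j(a) = x`, the event `⋂_{j ∈ S} E^j` is the
intersection of the reduced events over `S`, or over `S \ {x}` when `a ∈ N x`, so by induction
`P(⋂_{j ∈ S} E^j) ≤ ∏_S q + ∑_{x ∈ S} (P(E^x) - q x) ∏_{S \ {x}} q`, because
`P(E^x) = q x + (1 - q x) / |J a|` when `x ∈ J a` and `a ∈ N x`, and `P(E^x) = q x` otherwise.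
The right-hand side is part of the expansion of `∏_S (q j + (P(E^j) - q j))`, whose terms are
all nonnegative.
-/

/-- The sample space: an independent choice, for each `a : A`, of an index
`j(a)` in the finite set `J a`. -/
def ChoiceSpace {A : Type*} {m : ℕ} (J : A → Finset (Fin m)) : Type _ :=
  ∀ a : A, {x : Fin m // x ∈ J a}

/-- The probability of an event under the uniform distribution on
`ChoiceSpace J`, which is exactly the product distribution in which each
`j(a)` is chosen independently and uniformly from `J a`. -/
noncomputable def uniformProb {A : Type*} [Fintype A] {m : ℕ}
    (J : A → Finset (Fin m)) (E : Set (ChoiceSpace J)) : ℝ :=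
  (Nat.card E : ℝ) / (Nat.card (ChoiceSpace J) : ℝ)

/-- The event `E^j` that `j(a) = j` for some `a ∈ N j`. -/
def hitEvent {A : Type*} {m : ℕ} (J : A → Finset (Fin m)) (N : Fin m → Set A)
    (j : Fin m) : Set (ChoiceSpace J) :=
  {ω | ∃ a ∈ N j, (ω a : Fin m) = j}

open Finset

theorem Finset.prod_add_sum_mul_prod_erase_le_prod_add {ι R : Type*} [DecidableEq ι]
    [CommSemiring R] [PartialOrder R] [IsOrderedRing R] {f g : ι → R} (s : Finset ι)
    (hf : ∀ i ∈ s, 0 ≤ f i) (hg : ∀ i ∈ s, 0 ≤ g i) :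
    ∏ i ∈ s, f i + ∑ i ∈ s, g i * ∏ j ∈ s.erase i, f j ≤ ∏ i ∈ s, (f i + g i) := by
  induction s using Finset.induction_on with
  | empty => simp
  | @insert a s ha ih =>
    simp only [forall_mem_insert] at hf hg
    have hrest : ∑ i ∈ s, g i * ∏ j ∈ (insert a s).erase i, f j
        = f a * ∑ i ∈ s, g i * ∏ j ∈ s.erase i, f j := by
      rw [mul_sum]
      refine sum_congr rfl fun i hi => ?_
      rw [erase_insert_of_ne (ne_of_mem_of_not_mem hi ha).symm,
        prod_insert (fun h => ha (mem_of_mem_erase h))]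
      ring
    rw [prod_insert ha, sum_insert ha, prod_insert ha, erase_insert ha, hrest]
    calc f a * ∏ i ∈ s, f i + (g a * ∏ i ∈ s, f i + f a * ∑ i ∈ s, g i * ∏ j ∈ s.erase i, f j)
        ≤ f a * ∏ i ∈ s, f i + (g a * ∏ i ∈ s, f i
            + (f a + g a) * ∑ i ∈ s, g i * ∏ j ∈ s.erase i, f j) := by
          gcongr
          · exact sum_nonneg fun i hi => mul_nonneg (hg.2 i hi)
              (prod_nonneg fun j hj => hf.2 j (mem_of_mem_erase hj))
          · exact le_add_of_nonneg_right hg.1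
      _ = (f a + g a) * (∏ i ∈ s, f i + ∑ i ∈ s, g i * ∏ j ∈ s.erase i, f j) := by ring
      _ ≤ (f a + g a) * ∏ i ∈ s, (f i + g i) := by
          gcongr
          · exact add_nonneg hf.1 hg.1
          · exact ih hf.2 hg.2

theorem Finset.sum_prod_ite_erase_div_card {ι K : Type*} [DecidableEq ι] [Field K] [CharZero K]
    (q : ι → K) (S U : Finset ι) (p : ι → Prop) [DecidablePred p] (hU : U.Nonempty) :
    ∑ x ∈ U, (∏ j ∈ if p x then S.erase x else S, q j) / #U
      = ∏ j ∈ S, q j + ∑ x ∈ S, (if x ∈ U ∧ p x then (1 - q x) / #U else 0)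
          * ∏ j ∈ S.erase x, q j := by
  have hU : (#U : K) ≠ 0 := by exact_mod_cast hU.card_pos.ne'
  have hslice : ∀ x, (∏ j ∈ if p x then S.erase x else S, q j) / #U
      = (∏ j ∈ S, q j) / #U
        + if x ∈ S ∧ p x then (1 - q x) / #U * ∏ j ∈ S.erase x, q j else 0 := by
    intro x
    by_cases hpx : p x
    · by_cases hx : x ∈ S
      · rw [if_pos hpx, if_pos ⟨hx, hpx⟩, ← mul_prod_erase S q hx]
        ring
      · simp [hpx, hx]
    · simp [hpx]
  have hswap : ∑ x ∈ U, (if x ∈ S ∧ p x then (1 - q x) / #U * ∏ j ∈ S.erase x, q j else 0)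
      = ∑ x ∈ S, (if x ∈ U ∧ p x then (1 - q x) / #U else 0) * ∏ j ∈ S.erase x, q j := by
    simp only [ite_mul, zero_mul, ← sum_filter]
    congr 1
    ext x
    simp only [mem_filter]
    tauto
  rw [sum_congr rfl fun x _ => hslice x, sum_add_distrib, hswap, sum_const, nsmul_eq_mul,
    mul_div_cancel₀ _ hU]

lemma dependsOn_mem_biInter {ι κ : Type*} {α : ι → Type*} {E : κ → Set (∀ i, α i)}
    {S : Finset κ} {s : Set ι} (hE : ∀ k ∈ S, DependsOn (· ∈ E k) s) :
    DependsOn (· ∈ ⋂ k ∈ S, E k) s := fun ω ω' h => by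
  simp only [Set.mem_iInter₂, eq_iff_iff]
  exact forall₂_congr fun k hk => eq_iff_iff.mp (hE k hk h)

namespace ChoiceSpace

variable {A : Type*} {m : ℕ} {J : A → Finset (Fin m)}

instance [Finite A] : Finite (ChoiceSpace J) := Pi.finite

def coordEvent (J : A → Finset (Fin m)) (a : A) (v : Fin m) : Set (ChoiceSpace J) :=
  {ω | (ω a : Fin m) = v}

lemma coordEvent_eq_empty {a : A} {v : Fin m} (hv : v ∉ J a) : coordEvent J a v = ∅ :=
  Set.eq_empty_of_forall_notMem fun ω hω => hv (hω ▸ (ω a).2)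

lemma update_mem [DecidableEq A] {a : A} {E : Set (ChoiceSpace J)}
    (hE : DependsOn (· ∈ E) {a}ᶜ) {ω : ChoiceSpace J} (hω : ω ∈ E) (x : {v // v ∈ J a}) :
    (Function.update ω a x : ChoiceSpace J) ∈ E :=
  cast (hE fun _ hi => (Function.update_of_ne hi _ _).symm) hω

/-- Resampling the coordinate `a` is a bijection `(E ∩ {ω a = v}) × J a ≃ E`. -/
lemma card_inter_coordEvent_mul [DecidableEq A] {a : A} {E : Set (ChoiceSpace J)}
    (hE : DependsOn (· ∈ E) {a}ᶜ) {v : Fin m} (hv : v ∈ J a) :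
    Nat.card ↥(E ∩ coordEvent J a v) * #(J a) = Nat.card E := by
  let e : ↥(E ∩ coordEvent J a v) × J a ≃ E :=
    { toFun := fun p => ⟨Function.update p.1.1 a p.2, update_mem hE p.1.2.1 p.2⟩
      invFun := fun ω => (⟨Function.update ω.1 a ⟨v, hv⟩, update_mem hE ω.2 _,
          congrArg Subtype.val (Function.update_self a _ (ω.1 : ∀ a, J a))⟩, ω.1 a)
      left_inv := by
        rintro ⟨⟨ω, hωE, hωa⟩, x⟩
        have hω : (ω : ∀ a, J a) a = ⟨v, hv⟩ := Subtype.ext hωa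
        refine Prod.ext (Subtype.ext ?_) (Function.update_self a x (ω : ∀ a, J a))
        exact (Function.update_idem ..).trans (hω ▸ Function.update_eq_self a _)
      right_inv := fun ω => Subtype.ext <|
        (Function.update_idem ..).trans (Function.update_eq_self a (ω.1 : ∀ a, J a)) }
  rw [← Nat.card_congr e, Nat.card_prod, Nat.card_eq_finsetCard]

lemma hitEvent_eq_union (a : A) (N : Fin m → Set A) (j : Fin m) :
    hitEvent J N j = {ω | a ∈ N j ∧ (ω a : Fin m) = j} ∪ hitEvent J (N · \ {a}) j := by
  ext ω
  simp only [hitEvent, Set.mem_union, Set.mem_ofPred_eq, Set.mem_sdiff, Set.mem_singleton_iff]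
  constructor
  · rintro ⟨b, hb, hωb⟩
    by_cases hba : b = a
    · exact .inl ⟨hba ▸ hb, hba ▸ hωb⟩
    · exact .inr ⟨b, ⟨hb, hba⟩, hωb⟩
  · rintro (⟨ha, hωa⟩ | ⟨b, ⟨hb, -⟩, hωb⟩)
    exacts [⟨a, ha, hωa⟩, ⟨b, hb, hωb⟩]

lemma dependsOn_mem_hitEvent {a : A} {N : Fin m → Set A} {j : Fin m} (ha : a ∉ N j) :
    DependsOn (· ∈ hitEvent J N j) {a}ᶜ := fun ω ω' h =>
  propext <| show (∃ b ∈ N j, (ω b : Fin m) = j) ↔ ∃ b ∈ N j, (ω' b : Fin m) = j from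
    exists_congr fun b => and_congr_right fun hb => by rw [h b fun hba => ha (hba ▸ hb)]

lemma dependsOn_mem_iInter_hitEvent_sdiff (a : A) (N : Fin m → Set A) (S : Finset (Fin m)) :
    DependsOn (· ∈ ⋂ j ∈ S, hitEvent J (N · \ {a}) j) {a}ᶜ :=
  dependsOn_mem_biInter fun _ _ => dependsOn_mem_hitEvent fun h => h.2 rfl

open Classical in
lemma iInter_hitEvent_inter_coordEvent (a : A) (N : Fin m → Set A) (S : Finset (Fin m))
    (x : Fin m) :
    (⋂ j ∈ S, hitEvent J N j) ∩ coordEvent J a x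
      = (⋂ j ∈ if a ∈ N x then S.erase x else S, hitEvent J (N · \ {a}) j)
          ∩ coordEvent J a x := by
  ext ω
  simp only [Set.mem_inter_iff, Set.mem_iInter₂, coordEvent, Set.mem_ofPred_eq]
  refine and_congr_left fun hωa => ?_
  simp only [hitEvent_eq_union a N, Set.mem_union, Set.mem_ofPred_eq, hωa]
  split_ifs with hax
  · simp only [mem_erase]
    constructor
    · intro h j ⟨hjx, hj⟩
      exact (h j hj).resolve_left fun h' => hjx h'.2.symm
    · intro h j hj
      by_cases hjx : j = x
      · exact .inl ⟨hjx ▸ hax, hjx.symm⟩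
      · exact .inr (h j ⟨hjx, hj⟩)
  · exact forall₂_congr fun j hj => or_iff_right fun h => hax (h.2 ▸ h.1)

section Probability

variable [Fintype A]

lemma uniformProb_eq_ncard (E : Set (ChoiceSpace J)) :
    uniformProb J E = E.ncard / Nat.card (ChoiceSpace J) := by
  rw [uniformProb, Nat.card_coe_set_eq]

lemma uniformProb_nonneg (E : Set (ChoiceSpace J)) : 0 ≤ uniformProb J E := by
  unfold uniformProb; positivity

lemma uniformProb_mono {E F : Set (ChoiceSpace J)} (h : E ⊆ F) :
    uniformProb J E ≤ uniformProb J F := by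
  simp only [uniformProb_eq_ncard]
  gcongr
  exact Set.toFinite F

lemma uniformProb_univ (hJ : ∀ a, (J a).Nonempty) : uniformProb J Set.univ = 1 := by
  have : Nonempty (ChoiceSpace J) := ⟨fun a => ⟨(hJ a).choose, (hJ a).choose_spec⟩⟩
  rw [uniformProb, Nat.card_univ, div_self (by exact_mod_cast Nat.card_pos.ne')]

lemma uniformProb_union (E F : Set (ChoiceSpace J)) :
    uniformProb J (E ∪ F) = uniformProb J E + uniformProb J F - uniformProb J (E ∩ F) := by
  simp only [uniformProb_eq_ncard]
  rw [eq_sub_iff_add_eq, ← add_div, ← add_div]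
  congr 1
  exact_mod_cast Set.ncard_union_add_ncard_inter E F

lemma uniformProb_eq_sum_inter_coordEvent (a : A) (E : Set (ChoiceSpace J)) :
    uniformProb J E = ∑ v ∈ J a, uniformProb J (E ∩ coordEvent J a v) := by
  classical
  have : Fintype (ChoiceSpace J) := Fintype.ofFinite _
  simp only [uniformProb, ← sum_div, Nat.card_eq_fintype_card, Fintype.card_subtype]
  rw [card_eq_sum_card_fiberwise (f := fun ω : ChoiceSpace J => (ω a : Fin m))
    fun ω _ => (ω a).2]
  push_cast
  congr! 3 with v
  congr 1
  ext ω
  simp [coordEvent]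

lemma uniformProb_inter_coordEvent [DecidableEq A] {a : A} {E : Set (ChoiceSpace J)}
    (hE : DependsOn (· ∈ E) {a}ᶜ) {v : Fin m} (hv : v ∈ J a) :
    uniformProb J (E ∩ coordEvent J a v) = uniformProb J E / #(J a) := by
  have : (#(J a) : ℝ) ≠ 0 := by exact_mod_cast (card_pos.mpr ⟨v, hv⟩).ne'
  rw [uniformProb, uniformProb, ← card_inter_coordEvent_mul hE hv, Nat.cast_mul]
  field_simp

lemma uniformProb_coordEvent (hJ : ∀ a, (J a).Nonempty) {a : A} {v : Fin m} (hv : v ∈ J a) :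
    uniformProb J (coordEvent J a v) = 1 / #(J a) := by
  classical
  rw [← Set.univ_inter (coordEvent J a v), uniformProb_inter_coordEvent (fun _ _ _ => rfl) hv,
    uniformProb_univ hJ]

open Classical in
lemma uniformProb_hitEvent (hJ : ∀ a, (J a).Nonempty) (a : A) (N : Fin m → Set A) (j : Fin m) :
    uniformProb J (hitEvent J N j) = uniformProb J (hitEvent J (N · \ {a}) j)
      + if j ∈ J a ∧ a ∈ N j then (1 - uniformProb J (hitEvent J (N · \ {a}) j)) / #(J a)
        else 0 := by
  rw [hitEvent_eq_union a N j]
  by_cases ha : a ∈ N j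
  · have hfiber : {ω : ChoiceSpace J | a ∈ N j ∧ (ω a : Fin m) = j} = coordEvent J a j := by
      simp [ha, coordEvent]
    rw [hfiber, uniformProb_union]
    by_cases hj : j ∈ J a
    · rw [Set.inter_comm, uniformProb_inter_coordEvent (dependsOn_mem_hitEvent (by simp)) hj,
        uniformProb_coordEvent hJ hj, if_pos ⟨hj, ha⟩]
      ring
    · simp [coordEvent_eq_empty hj, hj, uniformProb]
  · simp [ha]

theorem uniformProb_iInter_hitEvent_le_prod (hJ : ∀ a, (J a).Nonempty) (B : Finset A)
    (N : Fin m → Set A) (hN : ∀ j, N j ⊆ B) (S : Finset (Fin m)) :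
    uniformProb J (⋂ j ∈ S, hitEvent J N j) ≤ ∏ j ∈ S, uniformProb J (hitEvent J N j) := by
  classical
  induction B using Finset.induction_on generalizing N S with
  | empty =>
    rcases S.eq_empty_or_nonempty with rfl | ⟨j, hj⟩
    · simp [uniformProb_univ hJ]
    · have hempty : hitEvent J N j = ∅ :=
        Set.eq_empty_of_forall_notMem fun ω ⟨b, hb, _⟩ => by simpa using hN j hb
      calc uniformProb J (⋂ j ∈ S, hitEvent J N j)
          ≤ uniformProb J (hitEvent J N j) := uniformProb_mono (Set.biInter_subset_of_mem hj)
        _ = 0 := by simp [hempty, uniformProb]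
        _ ≤ _ := prod_nonneg fun j _ => uniformProb_nonneg _
  | @insert a B ha ih =>
    have hN' : ∀ j, N j \ {a} ⊆ B := fun j b hb =>
      (mem_insert.mp (hN j hb.1)).resolve_left hb.2
    set q : Fin m → ℝ := fun j => uniformProb J (hitEvent J (N · \ {a}) j)
    set e : Fin m → ℝ := fun j => uniformProb J (hitEvent J N j)
    have hqe : ∀ j, q j ≤ e j := fun j =>
      uniformProb_mono (hitEvent_eq_union a N j ▸ Set.subset_union_right)
    calc uniformProb J (⋂ j ∈ S, hitEvent J N j)
        = ∑ x ∈ J a, uniformProb J ((⋂ j ∈ S, hitEvent J N j) ∩ coordEvent J a x) :=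
          uniformProb_eq_sum_inter_coordEvent a _
      _ = ∑ x ∈ J a, uniformProb J (⋂ j ∈ if a ∈ N x then S.erase x else S,
            hitEvent J (N · \ {a}) j) / #(J a) := by
          refine sum_congr rfl fun x hx => ?_
          rw [iInter_hitEvent_inter_coordEvent, uniformProb_inter_coordEvent
            (dependsOn_mem_iInter_hitEvent_sdiff a N _) hx]
      _ ≤ ∑ x ∈ J a, (∏ j ∈ if a ∈ N x then S.erase x else S, q j) / #(J a) := by
          gcongr with x
          exact ih _ hN' _
      _ = ∏ j ∈ S, q j + ∑ x ∈ S, (e x - q x) * ∏ j ∈ S.erase x, q j := by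
          rw [sum_prod_ite_erase_div_card q S (J a) (a ∈ N ·) (hJ a)]
          simp only [e, uniformProb_hitEvent hJ a N, q, add_sub_cancel_left]
      _ ≤ ∏ j ∈ S, (q j + (e j - q j)) :=
          prod_add_sum_mul_prod_erase_le_prod_add S (fun j _ => uniformProb_nonneg _)
            fun j _ => sub_nonneg.mpr (hqe j)
      _ = ∏ j ∈ S, e j := by simp only [add_sub_cancel]

end Probability

end ChoiceSpace

/-- Negative correlation: if each `j(a)`, `a ∈ A`, is chosen independently and
uniformly at random from the nonempty set `J a ⊆ {1,…,m}`, and `E^j` is the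
event that `j(a) = j` for some `a ∈ N j`, then for every `S ⊆ {1,…,m}`,
`P(⋂_{j ∈ S} E^j) ≤ ∏_{j ∈ S} P(E^j)`. -/
theorem hitEvents_negatively_correlated {A : Type*} [Fintype A] {m : ℕ}
    (J : A → Finset (Fin m)) (hJ : ∀ a, (J a).Nonempty)
    (N : Fin m → Set A) (S : Finset (Fin m)) :
    uniformProb J (⋂ j ∈ S, hitEvent J N j) ≤
      ∏ j ∈ S, uniformProb J (hitEvent J N j) :=
  ChoiceSpace.uniformProb_iInter_hitEvent_le_prod hJ Finset.univ N (by simp) S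
end
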